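/- arXiv:1803.04516 — 9 statements merged into one kernel-verified Lean document; each statement's English description precedes it below -/
import Mathlib

section
/- Let n ≥ 2, b ∈ {1, −1}, c ≥ 0 and d be real with λ = c − d ≠ 0, and let Q be the corresponding n×n tridiagonal matrix. Then Q is invertible if and only if d β_{n−1} − β_{n−2} ≠ 0. Moreover, if d β_{n−1} − β_{n−2} ≠ 0, then Q^{-1} is symmetric and for all 1 ≤ i ≤ j ≤ n one has (Q^{-1})_{ij} = u_i v_j, where u_i = b^{i−1} β_{i−1} and v_j = b^{j−1} β_{n−j} / (d β_{n−1} − β_{n−2}). -/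
/-- The sequence β₀ = 1, β₁ = d, βᵢ = c βᵢ₋₁ − βᵢ₋₂. -/
noncomputable def beta (c d : ℝ) : ℕ → ℝ
  | 0 => 1
  | 1 => d
  | i + 2 => c * beta c d (i + 1) - beta c d i

/-- The n×n symmetric tridiagonal matrix with diagonal (d, c, …, c, d) and
off-diagonal entries −b. -/
noncomputable def triQ (n : ℕ) (b c d : ℝ) : Matrix (Fin n) (Fin n) ℝ :=
  Matrix.of fun i j =>
    if i = j then (if (i : ℕ) = 0 ∨ (i : ℕ) = n - 1 then d else c)
    else if (i : ℕ) + 1 = (j : ℕ) ∨ (j : ℕ) + 1 = (i : ℕ) then -b else 0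

/-!
Conjugating by `diag (b ^ k)`, which is its own inverse since `b ^ 2 = 1`, reduces everything
to `b = 1`. There `u k = β k` satisfies the three-term recurrence of `Q` in every row except the
last, where it leaves `D = d β (n-1) - β (n-2)`, and its reflection `w k = β (n-1-k)` does the
same with the first row in place of the last. Hence the Green's matrix
`G i j = u (min i j) * w (max i j)` satisfies `Q G = D • 1`: off the diagonal this is the
recurrence for `u` or `w`, and on the diagonal it is the addition formula
`β (p+1) β (q+1) - β p β q = d β (p+q+1) - β (p+q)`. When `D = 0`, `u` is a nonzero kernel
vector.
-/

open Matrix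

lemma beta_add_two (c d : ℝ) (i : ℕ) :
    beta c d (i + 2) = c * beta c d (i + 1) - beta c d i := rfl

lemma beta_add (c d : ℝ) (p q : ℕ) :
    beta c d (p + 1) * beta c d (q + 1) - beta c d p * beta c d q =
      d * beta c d (p + q + 1) - beta c d (p + q) := by
  induction q generalizing p with
  | zero => simp [beta]; ring
  | succ q ih =>
    have h := ih (p + 1)
    rw [show p + 1 + q = p + q + 1 by omega] at h
    rw [show p + (q + 1) + 1 = p + q + 1 + 1 by omega, show p + (q + 1) = p + q + 1 by omega]
    linear_combination
      h + beta c d (p + 1) * beta_add_two c d q - beta c d (q + 1) * beta_add_two c d p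

def triQRow (n : ℕ) (c d : ℝ) (x : ℕ → ℝ) (i : ℕ) : ℝ :=
  (if i = 0 ∨ i = n - 1 then d else c) * x i - (if i + 1 < n then x (i + 1) else 0) -
    (if 0 < i then x (i - 1) else 0)

lemma triQ_one_mulVec_apply (n : ℕ) (c d : ℝ) (x : ℕ → ℝ) (i : Fin n) :
    (triQ n 1 c d *ᵥ fun k => x k) i = triQRow n c d x i := by
  calc (triQ n 1 c d *ᵥ fun k => x k) i
      = ∑ k ∈ Finset.range n,
          ((if k = i then (if (i : ℕ) = 0 ∨ (i : ℕ) = n - 1 then d else c) * x k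
              else 0 : ℝ) -
            (if k = i + 1 then x k else 0) - (if k + 1 = i then x k else 0)) := by
        rw [← Fin.sum_univ_eq_sum_range, mulVec, dotProduct]
        apply Finset.sum_congr rfl
        intro k _
        simp only [triQ, of_apply, Fin.ext_iff]
        split_ifs <;> first | omega | ring
    _ = triQRow n c d x i := by
        simp only [Finset.sum_sub_distrib, Finset.sum_ite_eq', Finset.mem_range, i.isLt, if_true]
        rcases i with ⟨_ | m, hi⟩
        · simp [triQRow]
        · simp [triQRow, show m < n by omega]

lemma triQRow_beta {n : ℕ} (hn : 2 ≤ n) (c d : ℝ) {i : ℕ} (hi : i < n) :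
    triQRow n c d (beta c d) i =
      if i = n - 1 then d * beta c d (n - 1) - beta c d (n - 2) else 0 := by
  rcases i with _ | m
  · simp [triQRow, beta, show 0 ≠ n - 1 by omega, show 1 < n by omega]
  · by_cases hm : m + 1 = n - 1
    · obtain rfl : n = m + 2 := by omega
      simp [triQRow]
    · simp [triQRow, hm, show m + 2 < n by omega, beta_add_two]

lemma triQRow_beta_rev {n : ℕ} (hn : 2 ≤ n) (c d : ℝ) {i : ℕ} (hi : i < n) :
    triQRow n c d (fun k => beta c d (n - 1 - k)) i =
      if i = 0 then d * beta c d (n - 1) - beta c d (n - 2) else 0 := by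
  rcases i with _ | m
  · simp [triQRow, show 0 ≠ n - 1 by omega, show 1 < n by omega, show n - 1 - 1 = n - 2 by omega]
  · by_cases hm : m + 1 = n - 1
    · obtain rfl : n = m + 2 := by omega
      simp [triQRow, beta]
    · obtain ⟨k, rfl⟩ : ∃ k, n = m + k + 3 := ⟨n - m - 3, by omega⟩
      rw [triQRow, if_neg (by omega), if_pos (by omega), if_pos (by omega),
        show m + k + 3 - 1 - (m + 1) = k + 1 by omega,
        show m + k + 3 - 1 - (m + 1 + 1) = k by omega,
        show m + k + 3 - 1 - (m + 1 - 1) = k + 2 by omega, if_neg (by omega), beta_add_two]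
      ring

lemma triQRow_green (n : ℕ) (c d : ℝ) (u w : ℕ → ℝ) (i j : ℕ) :
    triQRow n c d (fun k => u (min k j) * w (max k j)) i =
      if i < j then triQRow n c d u i * w j
      else if j < i then u j * triQRow n c d w i
      else w j * triQRow n c d u j +
        if j + 1 < n then u (j + 1) * w j - u j * w (j + 1) else 0 := by
  rcases lt_trichotomy i j with h | rfl | h
  · rw [if_pos h]
    simp only [triQRow, min_def, max_def]
    split_ifs <;> first | omega | ring
  · simp only [lt_irrefl, if_false, triQRow, min_def, max_def]
    split_ifs <;> first | omega | ring
  · rw [if_neg (by omega), if_pos h]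
    simp only [triQRow, min_def, max_def]
    split_ifs <;> first | omega | ring1 | (obtain rfl : j = i - 1 := (by omega); ring1)

noncomputable def triQGreen (n : ℕ) (c d : ℝ) : Matrix (Fin n) (Fin n) ℝ :=
  of fun i j => beta c d (min (i : ℕ) j) * beta c d (n - 1 - max (i : ℕ) j)

lemma triQ_one_mul_triQGreen {n : ℕ} (hn : 2 ≤ n) (c d : ℝ) :
    triQ n 1 c d * triQGreen n c d =
      (d * beta c d (n - 1) - beta c d (n - 2)) • 1 := by
  ext i j
  rw [mul_apply, ← dotProduct, ← mulVec, Matrix.smul_apply, one_apply, smul_eq_mul]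
  simp only [triQGreen, of_apply]
  rw [triQ_one_mulVec_apply n c d (fun k => beta c d (min k j) * beta c d (n - 1 - max k j)),
    triQRow_green n c d (beta c d) (fun k => beta c d (n - 1 - k))]
  rcases lt_trichotomy (i : ℕ) j with h | h | h
  · rw [if_pos h, triQRow_beta hn c d i.isLt, if_neg (by omega), if_neg (by omega)]
    ring
  · obtain rfl : i = j := Fin.ext h
    rw [if_neg (lt_irrefl _), if_neg (lt_irrefl _), triQRow_beta hn c d i.isLt, if_pos rfl]
    by_cases hlast : (i : ℕ) + 1 < n
    · obtain ⟨q, hq⟩ : ∃ q, n = i + q + 2 := ⟨n - i - 2, by omega⟩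
      have := beta_add c d i q
      rw [if_neg (by omega), if_pos hlast, show n - 1 - i = q + 1 by omega,
        show n - 1 - (i + 1) = q by omega, show n - 1 = i + q + 1 by omega,
        show n - 2 = i + q by omega]
      linear_combination this
    · rw [if_pos (by omega), if_neg hlast, show n - 1 - (i : ℕ) = 0 by omega, beta]
      ring
  · rw [if_neg (by omega), if_pos h, triQRow_beta_rev hn c d i.isLt, if_neg (by omega),
      if_neg (by omega)]
    ring

lemma triQ_one_mul_smul_triQGreen {n : ℕ} (hn : 2 ≤ n) (c d : ℝ)
    (hD : d * beta c d (n - 1) - beta c d (n - 2) ≠ 0) :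
    triQ n 1 c d * ((d * beta c d (n - 1) - beta c d (n - 2))⁻¹ • triQGreen n c d) = 1 := by
  rw [mul_smul_comm, triQ_one_mul_triQGreen hn, smul_smul, inv_mul_cancel₀ hD, one_smul]

lemma isUnit_triQ_one_iff {n : ℕ} (hn : 2 ≤ n) (c d : ℝ) :
    IsUnit (triQ n 1 c d) ↔ d * beta c d (n - 1) - beta c d (n - 2) ≠ 0 := by
  refine ⟨fun hQ hD => ?_,
    fun hD => IsUnit.of_mul_eq_one _ (triQ_one_mul_smul_triQGreen hn c d hD)⟩
  have hker : ∃ v, v ≠ 0 ∧ triQ n 1 c d *ᵥ v = 0 := by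
    refine ⟨fun k => beta c d k, fun h => ?_, ?_⟩
    · simpa [beta] using congrFun h ⟨0, by omega⟩
    · ext i
      rw [triQ_one_mulVec_apply, triQRow_beta hn c d i.isLt, hD, ite_self]
      rfl
  exact ((isUnit_iff_isUnit_det _).mp hQ).ne_zero (exists_mulVec_eq_zero_iff.mp hker)

lemma triQ_isSymm (n : ℕ) (b c d : ℝ) : (triQ n b c d).IsSymm := by
  refine IsSymm.ext fun i j => ?_
  by_cases h : i = j
  · rw [h]
  · simp only [triQ, of_apply, h, Ne.symm h, if_false, or_comm]

section Conjugation

variable {n : ℕ} {b : ℝ}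

lemma diagonal_pow_mul_self (hb : b * b = 1) :
    diagonal (fun k : Fin n => b ^ (k : ℕ)) * diagonal (fun k : Fin n => b ^ (k : ℕ)) = 1 := by
  rw [diagonal_mul_diagonal, ← diagonal_one]
  congr 1
  ext k
  rw [← mul_pow, hb, one_pow]

lemma triQ_eq_diagonal_mul_triQ_one_mul_diagonal (hb : b * b = 1) (c d : ℝ) :
    triQ n b c d = diagonal (fun k : Fin n => b ^ (k : ℕ)) * triQ n 1 c d *
      diagonal (fun k : Fin n => b ^ (k : ℕ)) := by
  ext i j
  have hpow (k : ℕ) : b ^ k * b ^ k = 1 := by rw [← mul_pow, hb, one_pow]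
  simp only [diagonal_mul, mul_diagonal, triQ, of_apply]
  split_ifs with hij _ hadj
  · subst hij; linear_combination -d * hpow i
  · subst hij; linear_combination -c * hpow i
  · rcases hadj with h | h
    · rw [← h, pow_succ]; linear_combination b * hpow i
    · rw [← h, pow_succ]; linear_combination b * hpow j
  · ring

lemma det_triQ (hb : b * b = 1) (c d : ℝ) : (triQ n b c d).det = (triQ n 1 c d).det := by
  rw [triQ_eq_diagonal_mul_triQ_one_mul_diagonal hb, det_mul, det_mul, mul_right_comm, ← det_mul,
    diagonal_pow_mul_self hb, det_one, one_mul]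

lemma inv_triQ (hb : b * b = 1) (c d : ℝ) :
    (triQ n b c d)⁻¹ = diagonal (fun k : Fin n => b ^ (k : ℕ)) * (triQ n 1 c d)⁻¹ *
      diagonal (fun k : Fin n => b ^ (k : ℕ)) := by
  rw [triQ_eq_diagonal_mul_triQ_one_mul_diagonal hb, Matrix.mul_inv_rev, Matrix.mul_inv_rev,
    inv_eq_right_inv (diagonal_pow_mul_self hb), mul_assoc]

end Conjugation

theorem triQ_inv_general (n : ℕ) (hn : 2 ≤ n) (b c d : ℝ) (hb : b = 1 ∨ b = -1) :
    (IsUnit (triQ n b c d) ↔ d * beta c d (n - 1) - beta c d (n - 2) ≠ 0) ∧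
    (d * beta c d (n - 1) - beta c d (n - 2) ≠ 0 →
      ((triQ n b c d)⁻¹).IsSymm ∧
      ∀ i j : Fin n, i ≤ j →
        (triQ n b c d)⁻¹ i j =
          (b ^ (i : ℕ) * beta c d (i : ℕ)) *
            (b ^ (j : ℕ) * beta c d (n - 1 - (j : ℕ)) /
              (d * beta c d (n - 1) - beta c d (n - 2)))) := by
  have hb2 : b * b = 1 := by rcases hb with rfl | rfl <;> norm_num
  refine ⟨?_, fun hD => ⟨(triQ_isSymm n b c d).inv, fun i j hij => ?_⟩⟩
  · rw [isUnit_iff_isUnit_det, det_triQ hb2, ← isUnit_iff_isUnit_det, isUnit_triQ_one_iff hn]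
  · have hij' : (i : ℕ) ≤ j := hij
    rw [inv_triQ hb2, inv_eq_right_inv (triQ_one_mul_smul_triQGreen hn c d hD)]
    simp only [diagonal_mul, mul_diagonal, Matrix.smul_apply, triQGreen, of_apply, smul_eq_mul,
      min_eq_left hij', max_eq_right hij']
    ring

/-- Q is invertible iff d β_{n−1} − β_{n−2} ≠ 0, and in that case
Q⁻¹ is symmetric with (Q⁻¹)ᵢⱼ = uᵢ vⱼ for i ≤ j, where (1-based)
uᵢ = b^{i−1} β_{i−1} and vⱼ = b^{j−1} β_{n−j} / (d β_{n−1} − β_{n−2}). -/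
theorem triQ_inv (n : ℕ) (hn : 2 ≤ n) (b c d : ℝ) (hb : b = 1 ∨ b = -1)
    (hc : 0 ≤ c) (hlam : c - d ≠ 0) :
    (IsUnit (triQ n b c d) ↔ d * beta c d (n - 1) - beta c d (n - 2) ≠ 0) ∧
    (d * beta c d (n - 1) - beta c d (n - 2) ≠ 0 →
      ((triQ n b c d)⁻¹).IsSymm ∧
      ∀ i j : Fin n, i ≤ j →
        (triQ n b c d)⁻¹ i j =
          (b ^ (i : ℕ) * beta c d (i : ℕ)) *
            (b ^ (j : ℕ) * beta c d (n - 1 - (j : ℕ)) /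
              (d * beta c d (n - 1) - beta c d (n - 2)))) :=
  triQ_inv_general n hn b c d hb
end

section
/- Let n ≥ 2 and let c > 2 and d > 1 be real with λ = c − d. Then the real numbers κ_i = φ_+ r_+^i − φ_- r_-^i satisfy 0 < κ_0 < κ_1 < ⋯ < κ_{n−1}, and κ = φ_+² r_+^{n−1} − φ_-² r_-^{n−1} > 0. -/
/-!
Both `r₊` and `r₋` are roots of `x² = c x - 1`, so `κᵢ` obeys `κᵢ₊₂ = c κᵢ₊₁ - κᵢ`, i.e.
`κᵢ₊₂ - κᵢ₊₁ = (c - 2) κᵢ₊₁ + (κᵢ₊₁ - κᵢ)`. Since `c > 2`, positivity and growth propagate from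
`κ₀ = r₊ - r₋ > 0` and `κ₁ - κ₀ = (d - 1)(r₊ - r₋) > 0`. Using `λ = r₊ + r₋ - d` and `r₊ r₋ = 1`,
`κ = r₋ᵏ ((d - r₋)² r₊²ᵏ - (d - r₊)²)` with `k = n - 1 ≥ 1`, and `|d - r₊| < (d - r₋) r₊ ≤ (d - r₋) r₊ᵏ`.
-/

theorem sq_half_add_eq_mul_sub_one {c s : ℝ} (hs : s ^ 2 = c ^ 2 - 4) :
    ((c + s) / 2) ^ 2 = c * ((c + s) / 2) - 1 := by
  linear_combination hs / 4

theorem sq_half_sub_eq_mul_sub_one {c s : ℝ} (hs : s ^ 2 = c ^ 2 - 4) :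
    ((c - s) / 2) ^ 2 = c * ((c - s) / 2) - 1 := by
  linear_combination hs / 4

theorem sub_pow_add_two_eq_of_sq_eq {c x y : ℝ} (hx : x ^ 2 = c * x - 1) (hy : y ^ 2 = c * y - 1)
    (a b : ℝ) (i : ℕ) :
    a * x ^ (i + 2) - b * y ^ (i + 2) = c * (a * x ^ (i + 1) - b * y ^ (i + 1)) - (a * x ^ i - b * y ^ i) := by
  linear_combination (a * x ^ i) * hx - (b * y ^ i) * hy

theorem strictMono_of_add_two_eq_mul_sub {c : ℝ} (hc : 2 ≤ c) {u : ℕ → ℝ}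
    (hu : ∀ i, u (i + 2) = c * u (i + 1) - u i) (h0 : 0 ≤ u 0) (h01 : u 0 < u 1) : StrictMono u := by
  have key : ∀ i, 0 ≤ u i ∧ u i < u (i + 1) := by
    intro i
    induction i with
    | zero => exact ⟨h0, h01⟩
    | succ i ih =>
      obtain ⟨hi, hlt⟩ := ih
      have hnext : 0 ≤ u (i + 1) := hi.trans hlt.le
      refine ⟨hnext, ?_⟩
      rw [hu i]
      nlinarith
  exact strictMono_nat_of_lt_succ fun i => (key i).2

theorem abs_sub_lt_sub_mul {d r r' : ℝ} (hd : 1 < d) (hr : 1 < r) (hrr' : r * r' = 1) :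
    |d - r| < (d - r') * r := by
  rw [abs_sub_lt_iff]
  constructor <;> nlinarith

theorem sub_sq_mul_pow_sub_pos {d r r' : ℝ} (hd : 1 < d) (hr : 1 < r) (hrr' : r * r' = 1)
    {k : ℕ} (hk : 1 ≤ k) : 0 < (d - r') ^ 2 * r ^ k - (d - r) ^ 2 * r' ^ k := by
  have hr' : 0 < r' := pos_of_mul_pos_right (hrr'.symm ▸ one_pos) (by linarith)
  have hdr' : 0 < d - r' := by nlinarith
  have hlt : |d - r| < (d - r') * r ^ k :=
    (abs_sub_lt_sub_mul hd hr hrr').trans_le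
      (mul_le_mul_of_nonneg_left (le_self_pow₀ hr.le (by omega)) hdr'.le)
  have hsq : (d - r) ^ 2 < ((d - r') * r ^ k) ^ 2 :=
    sq_lt_sq' (by linarith [neg_abs_le (d - r)]) ((le_abs_self _).trans_lt hlt)
  have hpow : r ^ k * r' ^ k = 1 := by rw [← mul_pow, hrr', one_pow]
  have hexp : (d - r') ^ 2 * r ^ k - (d - r) ^ 2 * r' ^ k
      = r' ^ k * (((d - r') * r ^ k) ^ 2 - (d - r) ^ 2) := by
    linear_combination (-(d - r') ^ 2 * r ^ k) * hpow
  rw [hexp]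
  exact mul_pos (pow_pos hr' k) (by linarith)

/-- Property: for c > 2 and d > 1, the real numbers
κᵢ = φ₊ r₊ⁱ − φ₋ r₋ⁱ satisfy 0 < κ₀ < κ₁ < ⋯ < κ_{n−1}, and
κ = φ₊² r₊^{n−1} − φ₋² r₋^{n−1} > 0. -/
theorem kappa_pos_strictMono (n : ℕ) (hn : 2 ≤ n) (c d : ℝ) (hc : 2 < c) (hd : 1 < d) :
    let lam : ℝ := c - d
    let rp : ℝ := (c + Real.sqrt (c ^ 2 - 4)) / 2
    let rm : ℝ := (c - Real.sqrt (c ^ 2 - 4)) / 2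
    let kappa : ℕ → ℝ := fun i => (rp - lam) * rp ^ i - (rm - lam) * rm ^ i
    0 < kappa 0 ∧
    (∀ i : ℕ, i + 1 ≤ n - 1 → kappa i < kappa (i + 1)) ∧
    0 < (rp - lam) ^ 2 * rp ^ (n - 1) - (rm - lam) ^ 2 * rm ^ (n - 1) := by
  intro lam rp rm kappa
  have hdisc : 0 < c ^ 2 - 4 := by nlinarith
  have hs : Real.sqrt (c ^ 2 - 4) ^ 2 = c ^ 2 - 4 := Real.sq_sqrt hdisc.le
  have hs0 : 0 < Real.sqrt (c ^ 2 - 4) := Real.sqrt_pos.2 hdisc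
  have hrp : 1 < rp := by simp only [rp]; linarith
  have hprod : rp * rm = 1 := by simp only [rp, rm]; linear_combination -hs / 4
  have hφp : rp - lam = d - rm := by simp only [lam, rp, rm]; ring
  have hφm : rm - lam = d - rp := by simp only [lam, rp, rm]; ring
  have h0 : kappa 0 = Real.sqrt (c ^ 2 - 4) := by simp only [kappa, rp, rm]; ring
  have h1 : kappa 1 = d * Real.sqrt (c ^ 2 - 4) := by
    simp only [kappa, hφp, hφm]; simp only [rp, rm]; ring
  have hmono : StrictMono kappa :=
    strictMono_of_add_two_eq_mul_sub hc.le
      (sub_pow_add_two_eq_of_sq_eq (sq_half_add_eq_mul_sub_one hs) (sq_half_sub_eq_mul_sub_one hs) _ _)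
      (h0 ▸ hs0.le) (by rw [h0, h1]; nlinarith)
  refine ⟨h0 ▸ hs0, fun i _ => hmono i.lt_succ_self, ?_⟩
  rw [hφp, hφm]
  exact sub_sq_mul_pow_sub_pos hd hrp hprod (by omega)
end

section
/- Let n ≥ 2 and let c > 2 and d > 1 be real with λ = c − d. Then the real numbers κ_i = φ_+ r_+^i − φ_- r_-^i satisfy the identity κ_i − κ_{i−1} = κ_1 − κ_0 + (c−2) Σ_{j=1}^{i−1} κ_j for i = 1, …, n−1, and consequently κ_{n−i−1} + κ_i < κ_{n−i} + κ_{i−1} for every i = 1, …, ⌈n/2⌉ − 1. -/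
/-! `r₊` and `r₋` are the roots of `x² - c x + 1`, so `κ` satisfies the recurrence
`κ (k + 2) = c κ (k + 1) - κ k`. Rewritten as `Δ (k + 1) = Δ k + (c - 2) κ (k + 1)` for the
differences `Δ k = κ (k + 1) - κ k`, it telescopes to the identity. It also shows inductively
that `κ` stays positive and nondecreasing once `0 < κ 0 ≤ κ 1`, which holds as `κ 0 = √(c² - 4)`
and `κ 1 = d κ 0`; hence `Δ` strictly increases for `c > 2`, and the inequality is
`Δ (i - 1) < Δ (n - i - 1)`. -/

section Recurrence

variable {R : Type*} {c : R} {κ : ℕ → R}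

theorem sub_succ_eq_sum_Icc_of_recurrence [CommRing R]
    (hκ : ∀ k, κ (k + 2) = c * κ (k + 1) - κ k) (m : ℕ) :
    κ (m + 1) - κ m = κ 1 - κ 0 + (c - 2) * ∑ j ∈ Finset.Icc 1 m, κ j := by
  induction m with
  | zero => simp
  | succ m ih =>
    rw [Finset.sum_Icc_succ_top (by omega)]
    linear_combination ih + hκ m

variable [CommRing R] [LinearOrder R] [IsStrictOrderedRing R]

theorem pos_and_le_succ_of_recurrence (hκ : ∀ k, κ (k + 2) = c * κ (k + 1) - κ k)
    (hc : 2 ≤ c) (h0 : 0 < κ 0) (h01 : κ 0 ≤ κ 1) (k : ℕ) :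
    0 < κ k ∧ κ k ≤ κ (k + 1) := by
  induction k with
  | zero => exact ⟨h0, h01⟩
  | succ k ih =>
    obtain ⟨hpos, hle⟩ := ih
    refine ⟨hpos.trans_le hle, ?_⟩
    rw [hκ k]
    nlinarith

theorem strictMono_sub_succ_of_recurrence (hκ : ∀ k, κ (k + 2) = c * κ (k + 1) - κ k)
    (hc : 2 < c) (h0 : 0 < κ 0) (h01 : κ 0 ≤ κ 1) :
    StrictMono fun m => κ (m + 1) - κ m := by
  refine strictMono_nat_of_lt_succ fun m => ?_
  have hpos := (pos_and_le_succ_of_recurrence hκ hc.le h0 h01 (m + 1)).1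
  have hstep : κ (m + 2) - κ (m + 1) = κ (m + 1) - κ m + (c - 2) * κ (m + 1) := by
    rw [hκ m]; ring
  change κ (m + 1) - κ m < κ (m + 2) - κ (m + 1)
  rw [hstep]
  nlinarith

end Recurrence

theorem recurrence_of_roots {R : Type*} [CommRing R] {c r s : R}
    (hr : r ^ 2 = c * r - 1) (hs : s ^ 2 = c * s - 1) (A B : R) (k : ℕ) :
    A * r ^ (k + 2) - B * s ^ (k + 2) =
      c * (A * r ^ (k + 1) - B * s ^ (k + 1)) - (A * r ^ k - B * s ^ k) := by
  linear_combination A * r ^ k * hr - B * s ^ k * hs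

theorem Real.sq_eq_mul_sub_one_of_root {c s r : ℝ} (hs : s ^ 2 = c ^ 2 - 4)
    (hr : r = (c + s) / 2 ∨ r = (c - s) / 2) : r ^ 2 = c * r - 1 := by
  rcases hr with rfl | rfl <;> linear_combination hs / 4

theorem kappa_diff_general (n : ℕ) (c d : ℝ) (hc : 2 < c) (hd : 1 < d) :
    let lam : ℝ := c - d
    let rp : ℝ := (c + Real.sqrt (c ^ 2 - 4)) / 2
    let rm : ℝ := (c - Real.sqrt (c ^ 2 - 4)) / 2
    let kappa : ℕ → ℝ := fun i => (rp - lam) * rp ^ i - (rm - lam) * rm ^ i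
    (∀ i : ℕ, 1 ≤ i → i ≤ n - 1 →
      kappa i - kappa (i - 1) =
        kappa 1 - kappa 0 + (c - 2) * ∑ j ∈ Finset.Icc 1 (i - 1), kappa j) ∧
    (∀ i : ℕ, 1 ≤ i → i ≤ (n + 1) / 2 - 1 →
      kappa (n - i - 1) + kappa i < kappa (n - i) + kappa (i - 1)) := by
  intro lam rp rm kappa
  have hdisc : 0 < c ^ 2 - 4 := by nlinarith
  have hsq : Real.sqrt (c ^ 2 - 4) ^ 2 = c ^ 2 - 4 := Real.sq_sqrt hdisc.le
  have hrec : ∀ k, kappa (k + 2) = c * kappa (k + 1) - kappa k :=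
    recurrence_of_roots (Real.sq_eq_mul_sub_one_of_root hsq (.inl rfl))
      (Real.sq_eq_mul_sub_one_of_root hsq (.inr rfl)) _ _
  have h0 : kappa 0 = Real.sqrt (c ^ 2 - 4) := by simp only [kappa, rp, rm]; ring
  have h1 : kappa 1 = d * Real.sqrt (c ^ 2 - 4) := by simp only [kappa, rp, rm, lam]; ring
  have hκ0 : 0 < kappa 0 := h0 ▸ Real.sqrt_pos.2 hdisc
  have hΔ := strictMono_sub_succ_of_recurrence hrec hc hκ0 (by rw [h1]; nlinarith)
  refine ⟨fun i hi _ => ?_, fun i hi hin => ?_⟩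
  · obtain ⟨m, rfl⟩ := Nat.exists_eq_add_of_le' hi
    simpa using sub_succ_eq_sum_Icc_of_recurrence hrec m
  · have h := hΔ (show i - 1 < n - i - 1 by omega)
    simp only [show i - 1 + 1 = i by omega, show n - i - 1 + 1 = n - i by omega] at h
    linarith

/-- Property: for c > 2 and d > 1, with κᵢ = φ₊ r₊ⁱ − φ₋ r₋ⁱ,
κᵢ − κ_{i−1} = κ₁ − κ₀ + (c−2) Σ_{j=1}^{i−1} κⱼ for i = 1, …, n−1, and hence
κ_{n−i−1} + κᵢ < κ_{n−i} + κ_{i−1} for i = 1, …, ⌈n/2⌉ − 1. -/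
theorem kappa_diff (n : ℕ) (hn : 2 ≤ n) (c d : ℝ) (hc : 2 < c) (hd : 1 < d) :
    let lam : ℝ := c - d
    let rp : ℝ := (c + Real.sqrt (c ^ 2 - 4)) / 2
    let rm : ℝ := (c - Real.sqrt (c ^ 2 - 4)) / 2
    let kappa : ℕ → ℝ := fun i => (rp - lam) * rp ^ i - (rm - lam) * rm ^ i
    (∀ i : ℕ, 1 ≤ i → i ≤ n - 1 →
      kappa i - kappa (i - 1) =
        kappa 1 - kappa 0 + (c - 2) * ∑ j ∈ Finset.Icc 1 (i - 1), kappa j) ∧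
    (∀ i : ℕ, 1 ≤ i → i ≤ (n + 1) / 2 - 1 →
      kappa (n - i - 1) + kappa i < kappa (n - i) + kappa (i - 1)) :=
  kappa_diff_general n c d hc hd
end

section
/- Let n ≥ 2, b = 1, c = 2 and d be real with λ = 2 − d ≠ 0, and suppose the corresponding n×n tridiagonal matrix Q is invertible. Then the sum s_i of the i-th row of Q^{-1} satisfies s_i = [ (n−1) u_i v_i + i v_i + (n−i+1) v_{n−i+1} ] / 2 for every i = 1, …, n. -/
/-!
For `b = 1` the vector `β = (β₀, …, β_{n-1})` satisfies `Q β = D eₙ` with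
`D = d β_{n-1} - β_{n-2}`, since every row but the last is the recurrence defining `β`; so
invertibility of `Q` forces `D ≠ 0`. For `c = 2` the sequence is affine, `βₖ = 1 + k (d - 1)`,
and `Q` maps the vector with entries `(n-1) βⱼ β_{n-1-j} + (j+1) β_{n-1-j} + (n-j) βⱼ` to the
constant vector `2D`: a polynomial identity in each of the three kinds of rows. Hence this
vector, divided by `2D`, is `Q⁻¹ 1`, the vector of row sums.
-/

open Matrix

theorem triQ_mulVec_apply {n : ℕ} (hn : 2 ≤ n) (b c d : ℝ) (f : ℕ → ℝ) (i : Fin n) :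
    (triQ n b c d *ᵥ fun j => f j) i =
      if (i : ℕ) = 0 then d * f 0 - b * f 1
      else if (i : ℕ) = n - 1 then d * f (n - 1) - b * f (n - 2)
      else c * f i - b * f (i - 1) - b * f (i + 1) := by
  obtain ⟨i, hi⟩ := i
  set δ := if i = 0 ∨ i = n - 1 then d else c
  have hsplit : ∀ j : ℕ, (if i = j then δ else if i + 1 = j ∨ j + 1 = i then -b else 0) * f j =
      (if i = j then δ * f i else 0) + (if i + 1 = j then -b * f (i + 1) else 0)
        + (if i - 1 = j then (if 0 < i then -b * f (i - 1) else 0) else 0) := by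
    intro j
    split_ifs <;> first | omega | (subst_vars; ring)
  simp only [mulVec, dotProduct, triQ, of_apply, Fin.ext_iff]
  rw [Fin.sum_univ_eq_sum_range
    (fun j => (if i = j then δ else if i + 1 = j ∨ j + 1 = i then -b else 0) * f j)]
  simp only [hsplit, Finset.sum_add_distrib, Finset.sum_ite_eq, Finset.mem_range]
  subst δ
  split_ifs <;> try omega
  · subst_vars; ring
  · rw [show i - 1 = n - 2 by omega]; subst_vars; ring
  · ring

theorem beta_two_apply (d : ℝ) : ∀ k : ℕ, beta 2 d k = 1 + k * (d - 1)
  | 0 => by simp [beta]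
  | 1 => by simp [beta]
  | k + 2 => by rw [beta, beta_two_apply d (k + 1), beta_two_apply d k]; push_cast; ring

theorem triQ_one_mulVec_beta {n : ℕ} (hn : 2 ≤ n) (c d : ℝ) (i : Fin n) :
    (triQ n 1 c d *ᵥ fun j => beta c d j) i =
      if (i : ℕ) = n - 1 then d * beta c d (n - 1) - beta c d (n - 2) else 0 := by
  rw [triQ_mulVec_apply hn]
  obtain ⟨_ | k, hk⟩ := i
  · simp [beta, show 0 ≠ n - 1 by omega]
  · simp only [Nat.add_sub_cancel, Nat.add_eq_zero_iff, one_ne_zero, and_false, if_false, one_mul]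
    split_ifs
    · rfl
    · rw [beta]; ring

theorem mul_beta_sub_beta_ne_zero_of_isUnit_triQ {n : ℕ} (hn : 2 ≤ n) {c d : ℝ}
    (hQ : IsUnit (triQ n 1 c d)) : d * beta c d (n - 1) - beta c d (n - 2) ≠ 0 := by
  intro hD
  have hβ : (triQ n 1 c d *ᵥ fun j => beta c d j) = triQ n 1 c d *ᵥ 0 := by
    ext i
    rw [triQ_one_mulVec_beta hn, hD, mulVec_zero]
    exact ite_self 0
  have := congrFun (mulVec_injective_iff_isUnit.mpr hQ hβ) ⟨0, by omega⟩
  simp [beta] at this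

/-- `2 D` times the row sum of `Q⁻¹` at the `0`-based index `j`. -/
noncomputable def rowSumNumerator (n : ℕ) (d : ℝ) (j : ℕ) : ℝ :=
  ((n : ℝ) - 1) * beta 2 d j * beta 2 d (n - 1 - j) + ((j : ℝ) + 1) * beta 2 d (n - 1 - j)
    + ((n : ℝ) - j) * beta 2 d j

theorem triQ_mulVec_rowSumNumerator {n : ℕ} (hn : 2 ≤ n) (d : ℝ) :
    (triQ n 1 2 d *ᵥ fun j => rowSumNumerator n d j) =
      fun _ => 2 * (d * beta 2 d (n - 1) - beta 2 d (n - 2)) := by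
  ext ⟨i, hi⟩
  rw [triQ_mulVec_apply hn]
  simp only [rowSumNumerator, beta_two_apply]
  split_ifs <;> subst_vars <;>
    simp (disch := omega) only [Nat.cast_sub, Nat.cast_add, Nat.cast_ofNat, Nat.cast_one,
      Nat.cast_zero] <;>
    ring

theorem rowSum_c_eq_two_b_eq_one_general (n : ℕ) (hn : 2 ≤ n) (d : ℝ)
    (hQ : IsUnit (triQ n 1 2 d)) :
    let D : ℝ := d * beta 2 d (n - 1) - beta 2 d (n - 2)
    let u : ℕ → ℝ := fun i => (1 : ℝ) ^ (i - 1) * beta 2 d (i - 1)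
    let v : ℕ → ℝ := fun i => (1 : ℝ) ^ (i - 1) * beta 2 d (n - i) / D
    ∀ i : Fin n, (∑ j, (triQ n 1 2 d)⁻¹ i j) =
      (((n : ℝ) - 1) * u ((i : ℕ) + 1) * v ((i : ℕ) + 1)
        + (((i : ℕ) + 1 : ℕ) : ℝ) * v ((i : ℕ) + 1)
        + ((n : ℝ) - (((i : ℕ) + 1 : ℕ) : ℝ) + 1) * v (n - ((i : ℕ) + 1) + 1)) / 2 := by
  intro D u v i
  have hD : D ≠ 0 := mul_beta_sub_beta_ne_zero_of_isUnit_triQ hn hQ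
  let _ : Invertible (triQ n 1 2 d) := hQ.invertible
  have hinv : (triQ n 1 2 d)⁻¹ *ᵥ 1 = (2 * D)⁻¹ • fun j : Fin n => rowSumNumerator n d j := by
    refine inv_mulVec_eq_vec ?_
    rw [mulVec_smul, triQ_mulVec_rowSumNumerator hn]
    ext
    exact (inv_mul_cancel₀ (mul_ne_zero two_ne_zero hD)).symm
  have hrow : ∑ j, (triQ n 1 2 d)⁻¹ i j = rowSumNumerator n d i / (2 * D) := by
    simpa [mulVec, dotProduct, div_eq_inv_mul] using congrFun hinv i
  simp only [hrow, rowSumNumerator, u, v, one_pow, one_mul, Nat.add_sub_cancel]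
  rw [show n - (n - ((i : ℕ) + 1) + 1) = i by omega, show n - ((i : ℕ) + 1) = n - 1 - i by omega]
  push_cast
  field_simp
  ring

/-- Theorem, row sums, c = 2 and b = 1: the i-th row sum of Q⁻¹
equals [(n−1) uᵢ vᵢ + i vᵢ + (n−i+1) v_{n−i+1}] / 2 (1-based indices). -/
theorem rowSum_c_eq_two_b_eq_one (n : ℕ) (hn : 2 ≤ n) (d : ℝ)
    (hlam : (2 : ℝ) - d ≠ 0) (hQ : IsUnit (triQ n 1 2 d)) :
    let D : ℝ := d * beta 2 d (n - 1) - beta 2 d (n - 2)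
    let u : ℕ → ℝ := fun i => (1 : ℝ) ^ (i - 1) * beta 2 d (i - 1)
    let v : ℕ → ℝ := fun i => (1 : ℝ) ^ (i - 1) * beta 2 d (n - i) / D
    ∀ i : Fin n, (∑ j, (triQ n 1 2 d)⁻¹ i j) =
      (((n : ℝ) - 1) * u ((i : ℕ) + 1) * v ((i : ℕ) + 1)
        + (((i : ℕ) + 1 : ℕ) : ℝ) * v ((i : ℕ) + 1)
        + ((n : ℝ) - (((i : ℕ) + 1 : ℕ) : ℝ) + 1) * v (n - ((i : ℕ) + 1) + 1)) / 2 :=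
  rowSum_c_eq_two_b_eq_one_general n hn d hQ
end

section
/- Fix b ∈ {1, −1} and real numbers c > 2 and d > 1 with λ = c − d ≠ 0, and for each n ≥ 2 let Q_n be the corresponding n×n tridiagonal matrix (which is invertible). Then (1/n) · trace(Q_n^{-1}) converges, as n → ∞, to 1/κ_0 = 1/√(c² − 4). -/
/-!
Conjugating by `E = diag(bⁱ)` reduces to `b = 1`. The inverse of `Q = Q_n(1)` is the Green's
matrix `β_{min(i,j)} β_{n-1-max(i,j)} / D_n`: `k ↦ β_k` solves every row of `Q x = 0` except the
last, its reversal every row except the first, and `D_n = d β_{n-1} - β_{n-2}` is their Casoratian,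
positive because `β` increases. Hence `tr Q⁻¹ = Σ_{i<n} β_i β_{n-1-i} / D_n`. Since
`β_i / rⁱ → A` for the larger root `r` of `x² - c x + 1`, a Cesàro argument gives
`Σ_{i<n} β_i β_{n-1-i} ~ n A² r^{n-1}`, while `D_n ~ A (d - r⁻¹) r^{n-1}`; the ratio
`A / (d - r⁻¹)` is `1 / κ₀`.
-/

open Filter Topology Finset

section Beta

variable {c d : ℝ}

lemma one_le_beta_and_beta_le_succ (hc : 2 ≤ c) (hd : 1 ≤ d) (i : ℕ) :
    1 ≤ beta c d i ∧ beta c d i ≤ beta c d (i + 1) := by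
  induction i with
  | zero => exact ⟨le_rfl, hd⟩
  | succ i ih =>
    obtain ⟨h1, h2⟩ := ih
    show _ ∧ _ ≤ c * beta c d (i + 1) - beta c d i
    constructor <;> nlinarith

lemma beta_mul_sub_eq {r s : ℝ} (hsum : r + s = c) (hprod : r * s = 1) (i : ℕ) :
    beta c d i * (r - s) = (d - s) * r ^ i - (d - r) * s ^ i := by
  subst hsum
  induction i using Nat.twoStepInduction with
  | zero => simp [beta]
  | one => simp only [beta]; ring
  | more i ih₀ ih₁ =>
    show ((r + s) * beta (r + s) d (i + 1) - beta (r + s) d i) * (r - s) = _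
    linear_combination (r + s) * ih₁ - ih₀ + ((d - s) * r ^ i - (d - r) * s ^ i) * hprod

lemma beta_succ_mul_beta_succ_sub (a e : ℕ) :
    beta c d (a + 1) * beta c d (e + 1) - beta c d a * beta c d e
      = d * beta c d (a + e + 1) - beta c d (a + e) := by
  induction a generalizing e with
  | zero => simp [beta]
  | succ a ih =>
    have h := ih (e + 1)
    rw [show a + 1 + e + 1 = a + (e + 1) + 1 by omega, show a + 1 + e = a + (e + 1) by omega]
    show beta c d (a + 2) * _ - _ = _
    rw [beta] at h ⊢
    linear_combination h

-- The Casoratian `β_{i+1} β_{n-1-i} - β_i β_{n-2-i}` of `beta` and its reversal, evaluated at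
-- `i = n - 2`; it does not depend on `i` (`beta_succ_mul_beta_succ_sub`).
noncomputable def casoratian (c d : ℝ) (n : ℕ) : ℝ := d * beta c d (n - 1) - beta c d (n - 2)

lemma casoratian_pos (hc : 2 ≤ c) (hd : 1 < d) {n : ℕ} (hn : 2 ≤ n) : 0 < casoratian c d n := by
  obtain ⟨m, rfl⟩ : ∃ m, n = m + 2 := ⟨n - 2, by omega⟩
  obtain ⟨h1, hmono⟩ := one_le_beta_and_beta_le_succ hc hd.le m
  have h1' := (one_le_beta_and_beta_le_succ hc hd.le (m + 1)).1
  rw [casoratian, show m + 2 - 1 = m + 1 by omega, Nat.add_sub_cancel]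
  nlinarith

end Beta

lemma tendsto_inv_mul_sum_mul_reflect {γ : ℕ → ℝ} {a : ℝ} (h : Tendsto γ atTop (𝓝 a)) :
    Tendsto (fun n : ℕ => (n : ℝ)⁻¹ * ∑ i ∈ range n, γ i * γ (n - 1 - i)) atTop (𝓝 (a ^ 2)) := by
  set ε : ℕ → ℝ := fun i => γ i - a
  have hε : Tendsto ε atTop (𝓝 0) := by simpa using h.sub_const a
  have hsplit (n : ℕ) : ∑ i ∈ range n, γ i * γ (n - 1 - i)
      = n * a ^ 2 + 2 * a * ∑ i ∈ range n, ε i + ∑ i ∈ range n, ε i * ε (n - 1 - i) := by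
    calc ∑ i ∈ range n, γ i * γ (n - 1 - i)
        = ∑ i ∈ range n, (a ^ 2 + a * ε i + a * ε (n - 1 - i) + ε i * ε (n - 1 - i)) :=
          sum_congr rfl fun i _ => by simp only [ε]; ring
      _ = _ := by
          rw [sum_add_distrib, sum_add_distrib, sum_add_distrib, ← mul_sum, ← mul_sum,
            sum_range_reflect ε n, sum_const, card_range, nsmul_eq_mul]
          ring
  -- `|x y| ≤ (x² + y²) / 2` and reflection bound the cross terms by the Cesàro mean of `ε²`.
  have hcross_le (n : ℕ) : |∑ i ∈ range n, ε i * ε (n - 1 - i)| ≤ ∑ i ∈ range n, ε i ^ 2 := by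
    calc |∑ i ∈ range n, ε i * ε (n - 1 - i)|
        ≤ ∑ i ∈ range n, (ε i ^ 2 + ε (n - 1 - i) ^ 2) / 2 := by
          refine (abs_sum_le_sum_abs _ _).trans (sum_le_sum fun i _ => ?_)
          rw [abs_mul]
          nlinarith [sq_nonneg (|ε i| - |ε (n - 1 - i)|), sq_abs (ε i), sq_abs (ε (n - 1 - i))]
      _ = ∑ i ∈ range n, ε i ^ 2 := by
          rw [← sum_div, sum_add_distrib, sum_range_reflect (fun i => ε i ^ 2) n]
          ring
  have hsq : Tendsto (fun n : ℕ => (n : ℝ)⁻¹ * ∑ i ∈ range n, ε i ^ 2) atTop (𝓝 0) := by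
    simpa using (hε.pow 2).cesaro
  have hcross : Tendsto (fun n : ℕ => (n : ℝ)⁻¹ * ∑ i ∈ range n, ε i * ε (n - 1 - i))
      atTop (𝓝 0) := by
    refine squeeze_zero_norm (fun n => ?_) hsq
    rw [Real.norm_eq_abs, abs_mul, abs_inv, Nat.abs_cast]
    exact mul_le_mul_of_nonneg_left (hcross_le n) (by positivity)
  have hlim := ((hε.cesaro.const_mul (2 * a)).add hcross).const_add (a ^ 2)
  rw [mul_zero, add_zero, add_zero] at hlim
  refine hlim.congr' ?_
  filter_upwards [eventually_ne_atTop 0] with n hn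
  rw [hsplit]
  field_simp
  ring

section Asymptotics

variable {c d r s : ℝ}

lemma tendsto_beta_div_pow (hsum : r + s = c) (hprod : r * s = 1) (hs : 0 ≤ s) (hsr : s < r) :
    Tendsto (fun i => beta c d i / r ^ i) atTop (𝓝 ((d - s) / (r - s))) := by
  have hr : 0 < r := hs.trans_lt hsr
  have hrs : r - s ≠ 0 := sub_ne_zero.mpr hsr.ne'
  have hpow : Tendsto (fun i : ℕ => (s / r) ^ i) atTop (𝓝 0) :=
    tendsto_pow_atTop_nhds_zero_of_lt_one (div_nonneg hs hr.le) ((div_lt_one hr).mpr hsr)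
  have hlim := ((hpow.const_mul (d - r)).const_sub (d - s)).div_const (r - s)
  rw [mul_zero, sub_zero] at hlim
  refine hlim.congr fun i => ?_
  rw [div_eq_div_iff hrs (pow_ne_zero i hr.ne'),
    beta_mul_sub_eq hsum hprod, div_pow]
  field_simp

lemma tendsto_inv_mul_sum_beta_mul_div_casoratian (hsum : r + s = c) (hprod : r * s = 1)
    (hs : 0 ≤ s) (hsr : s < r) (hd : d ≠ s) :
    Tendsto (fun n : ℕ => 1 / (n : ℝ) *
      ((∑ i ∈ range n, beta c d i * beta c d (n - 1 - i)) / casoratian c d n))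
      atTop (𝓝 (1 / (r - s))) := by
  have hr : 0 < r := hs.trans_lt hsr
  set γ : ℕ → ℝ := fun i => beta c d i / r ^ i
  set A := (d - s) / (r - s)
  have hγ : Tendsto γ atTop (𝓝 A) := tendsto_beta_div_pow hsum hprod hs hsr
  have hbeta (i : ℕ) : beta c d i = γ i * r ^ i := by
    simp only [γ]; field_simp
  rw [← tendsto_add_atTop_iff_nat 2]
  have hnum := (tendsto_inv_mul_sum_mul_reflect hγ).comp (tendsto_add_atTop_nat 2)
  have hden := ((tendsto_add_atTop_iff_nat 1).mpr hγ |>.const_mul d).sub (hγ.const_mul s)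
  have hrs : r - s ≠ 0 := sub_ne_zero.mpr hsr.ne'
  have hA : d * A - s * A ≠ 0 := by
    rw [← sub_mul]
    exact mul_ne_zero (sub_ne_zero.mpr hd) (div_ne_zero (sub_ne_zero.mpr hd) hrs)
  convert hnum.div hden hA using 1
  · ext n
    have hnum_eq : ∑ i ∈ range (n + 2), beta c d i * beta c d (n + 2 - 1 - i)
        = r ^ (n + 1) * ∑ i ∈ range (n + 2), γ i * γ (n + 2 - 1 - i) := by
      rw [mul_sum]
      refine sum_congr rfl fun i hi => ?_
      have hpow : r ^ i * r ^ (n + 2 - 1 - i) = r ^ (n + 1) := by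
        rw [← pow_add]; congr 1; have := mem_range.mp hi; omega
      rw [hbeta i, hbeta (n + 2 - 1 - i), ← hpow]
      ring
    have hden_eq : casoratian c d (n + 2) = r ^ (n + 1) * (d * γ (n + 1) - s * γ n) := by
      have hpow : r ^ n = r ^ (n + 1) * s := by rw [pow_succ, mul_assoc, hprod, mul_one]
      rw [casoratian, show n + 2 - 1 = n + 1 by omega, Nat.add_sub_cancel, hbeta, hbeta, hpow]
      ring
    simp only [Function.comp_apply, Pi.div_apply]
    rw [hnum_eq, hden_eq, mul_div_mul_left _ _ (pow_ne_zero _ hr.ne'), one_div, mul_div_assoc]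
  · simp only [A]; field_simp

end Asymptotics

section TriQApply

variable {n : ℕ} {c d : ℝ}

noncomputable def triQApply (n : ℕ) (c d : ℝ) (f : ℕ → ℝ) (i : ℕ) : ℝ :=
  (if i = 0 ∨ i = n - 1 then d else c) * f i
    - ((if 0 < i then f (i - 1) else 0) + (if i + 1 < n then f (i + 1) else 0))

lemma sum_triQ_one_mul (f : ℕ → ℝ) (i : Fin n) :
    ∑ k : Fin n, triQ n 1 c d i k * f k = triQApply n c d f i := by
  have hsplit (k : Fin n) : triQ n 1 c d i k * f k
      = (if (k : ℕ) = i then (if (i : ℕ) = 0 ∨ (i : ℕ) = n - 1 then d else c) * f k else 0)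
        - ((if (k : ℕ) + 1 = i then f k else 0) + (if (k : ℕ) = i + 1 then f k else 0)) := by
    simp only [triQ, Matrix.of_apply, Fin.ext_iff]
    split_ifs <;> first | omega | ring
  simp only [hsplit, sum_sub_distrib, sum_add_distrib]
  rw [Fin.sum_univ_eq_sum_range (fun k => if k = (i : ℕ) then _ * f k else 0),
    Fin.sum_univ_eq_sum_range (fun k => if k + 1 = (i : ℕ) then f k else 0),
    Fin.sum_univ_eq_sum_range (fun k => if k = (i : ℕ) + 1 then f k else 0)]
  obtain ⟨i, hi⟩ := i
  cases i with
  | zero => simp [triQApply, hi]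
  | succ i => simp [triQApply, hi, Nat.lt_of_succ_lt hi]

lemma triQApply_congr {f g : ℕ → ℝ} {i : ℕ} (h : ∀ k, i ≤ k + 1 → k ≤ i + 1 → f k = g k) :
    triQApply n c d f i = triQApply n c d g i := by
  simp only [triQApply]
  rw [h i (by omega) (by omega), h (i + 1) (by omega) le_rfl]
  split_ifs <;> first | rfl | rw [h (i - 1) (by omega) (by omega)]

lemma triQApply_const_mul (x : ℝ) (f : ℕ → ℝ) (i : ℕ) :
    triQApply n c d (fun k => x * f k) i = x * triQApply n c d f i := by
  simp only [triQApply]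
  split_ifs <;> ring

lemma triQApply_reflect (f : ℕ → ℝ) {i : ℕ} (hi : i < n) :
    triQApply n c d (fun k => f (n - 1 - k)) i = triQApply n c d f (n - 1 - i) := by
  simp only [triQApply]
  split_ifs <;> first | omega | (rw [add_comm]; congr 3 <;> omega) | congr 3

lemma triQApply_beta {i : ℕ} (hi : i + 1 < n) : triQApply n c d (beta c d) i = 0 := by
  cases i with
  | zero => simp [triQApply, hi, beta]
  | succ i =>
    simp only [triQApply, if_neg (show ¬(i + 1 = 0 ∨ i + 1 = n - 1) by omega), if_pos hi]
    simp [beta]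

lemma triQApply_beta_last (hn : 2 ≤ n) : triQApply n c d (beta c d) (n - 1) = casoratian c d n := by
  rw [triQApply, casoratian, if_pos (Or.inr rfl), if_pos (by omega), if_neg (by omega),
    show n - 1 - 1 = n - 2 by omega, add_zero]

end TriQApply

section Inverse

variable {n : ℕ} {c d : ℝ}

lemma triQApply_beta_min_mul_beta_sub_max (hn : 2 ≤ n) {i j : ℕ} (hi : i < n) (hj : j < n) :
    triQApply n c d (fun k => beta c d (min k j) * beta c d (n - 1 - max k j)) i
      = if i = j then casoratian c d n else 0 := by
  rcases lt_trichotomy i j with hij | rfl | hij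
  · rw [if_neg hij.ne, triQApply_congr (g := fun k => beta c d (n - 1 - j) * beta c d k),
      triQApply_const_mul, triQApply_beta (by omega), mul_zero]
    intro k _ hk
    rw [min_eq_left (by omega), max_eq_right (by omega), mul_comm]
  · have hdiag : triQApply n c d (fun k => beta c d (min k i) * beta c d (n - 1 - max k i)) i
        = beta c d (n - 1 - i) * triQApply n c d (beta c d) i
          + if i + 1 < n then
              beta c d (i + 1) * beta c d (n - 1 - i) - beta c d i * beta c d (n - 1 - (i + 1))
            else 0 := by
      simp only [triQApply, min_self, max_self, min_eq_left (Nat.sub_le i 1),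
        max_eq_right (Nat.sub_le i 1), min_eq_right (Nat.le_succ i), max_eq_left (Nat.le_succ i)]
      split_ifs <;> ring
    rw [if_pos rfl, hdiag]
    by_cases hlast : i + 1 < n
    · have hcas := beta_succ_mul_beta_succ_sub (c := c) (d := d) i (n - 2 - i)
      rw [show n - 2 - i + 1 = n - 1 - i by omega, show i + (n - 2 - i) + 1 = n - 1 by omega,
        show i + (n - 2 - i) = n - 2 by omega, ← show n - 1 - (i + 1) = n - 2 - i by omega] at hcas
      rw [triQApply_beta hlast, if_pos hlast, hcas, casoratian, mul_zero, zero_add]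
    · obtain rfl : i = n - 1 := by omega
      rw [if_neg hlast, add_zero, triQApply_beta_last hn, Nat.sub_self, beta, one_mul]
  · rw [if_neg hij.ne', triQApply_congr (g := fun k => beta c d j * beta c d (n - 1 - k)),
      triQApply_const_mul, triQApply_reflect _ hi, triQApply_beta (by omega), mul_zero]
    intro k hk _
    rw [min_eq_right (by omega), max_eq_left (by omega)]

variable (n c d) in
noncomputable def triQInv : Matrix (Fin n) (Fin n) ℝ :=
  Matrix.of fun i j =>
    beta c d (min (i : ℕ) j) * beta c d (n - 1 - max (i : ℕ) j) / casoratian c d n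

lemma triQ_one_mul_triQInv (hn : 2 ≤ n) (hcas : casoratian c d n ≠ 0) :
    triQ n 1 c d * triQInv n c d = 1 := by
  ext i j
  simp only [Matrix.mul_apply, triQInv, Matrix.of_apply, mul_div_assoc', ← sum_div]
  rw [sum_triQ_one_mul (fun k => beta c d (min k j) * beta c d (n - 1 - max k j)),
    triQApply_beta_min_mul_beta_sub_max hn i.isLt j.isLt, Matrix.one_apply]
  simp only [Fin.val_inj, ite_div, div_self hcas, zero_div]

lemma trace_triQInv :
    (triQInv n c d).trace
      = (∑ i ∈ range n, beta c d i * beta c d (n - 1 - i)) / casoratian c d n := by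
  rw [sum_div, ← Fin.sum_univ_eq_sum_range (fun i => beta c d i * beta c d (n - 1 - i) / _)]
  simp [Matrix.trace, triQInv]

end Inverse

section Conjugation

variable {n : ℕ} {b c d : ℝ}

variable (n b) in
noncomputable def powDiag : Matrix (Fin n) (Fin n) ℝ := Matrix.diagonal fun i => b ^ (i : ℕ)

lemma powDiag_mul_self (hb : b * b = 1) : powDiag n b * powDiag n b = 1 := by
  simp [powDiag, Matrix.diagonal_mul_diagonal, ← mul_pow, hb]

lemma triQ_eq_powDiag_mul_triQ_one_mul_powDiag (hb : b * b = 1) :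
    triQ n b c d = powDiag n b * triQ n 1 c d * powDiag n b := by
  ext i j
  rw [powDiag, Matrix.mul_diagonal, Matrix.diagonal_mul]
  have hpow (k : ℕ) : b ^ k * b ^ k = 1 := by rw [← mul_pow, hb, one_pow]
  simp only [triQ, Matrix.of_apply]
  split_ifs with hij _ hadj <;> try subst hij
  · linear_combination (-d) * hpow i
  · linear_combination (-c) * hpow i
  · rcases hadj with h | h <;> rw [← h, pow_succ]
    · linear_combination b * hpow i
    · linear_combination b * hpow j
  · simp

lemma triQ_mul_powDiag_triQInv_powDiag (hb : b * b = 1) (hn : 2 ≤ n)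
    (hcas : casoratian c d n ≠ 0) :
    triQ n b c d * (powDiag n b * triQInv n c d * powDiag n b) = 1 := by
  rw [triQ_eq_powDiag_mul_triQ_one_mul_powDiag hb]
  simp only [Matrix.mul_assoc]
  rw [← Matrix.mul_assoc (powDiag n b) (powDiag n b), powDiag_mul_self hb, Matrix.one_mul,
    ← Matrix.mul_assoc (triQ n 1 c d), triQ_one_mul_triQInv hn hcas, Matrix.one_mul,
    powDiag_mul_self hb]

lemma trace_inv_triQ (hb : b * b = 1) (hn : 2 ≤ n) (hcas : casoratian c d n ≠ 0) :
    (triQ n b c d)⁻¹.trace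
      = (∑ i ∈ range n, beta c d i * beta c d (n - 1 - i)) / casoratian c d n := by
  rw [Matrix.inv_eq_right_inv (triQ_mul_powDiag_triQInv_powDiag hb hn hcas),
    Matrix.trace_mul_comm, ← Matrix.mul_assoc, powDiag_mul_self hb, Matrix.one_mul, trace_triQInv]

end Conjugation

theorem trace_inv_limit_general (b c d : ℝ) (hb : b = 1 ∨ b = -1) (hc : 2 < c) (hd : 1 < d) :
    (∀ n : ℕ, 2 ≤ n → IsUnit (triQ n b c d)) ∧
    Filter.Tendsto (fun n : ℕ => (1 / (n : ℝ)) * Matrix.trace (triQ n b c d)⁻¹)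
      Filter.atTop (nhds (1 / Real.sqrt (c ^ 2 - 4))) := by
  have hb2 : b * b = 1 := by rcases hb with rfl | rfl <;> norm_num
  have hcas {n : ℕ} (hn : 2 ≤ n) : casoratian c d n ≠ 0 := (casoratian_pos hc.le hd hn).ne'
  refine ⟨fun n hn => (Matrix.isUnit_iff_isUnit_det _).mpr <| Matrix.isUnit_det_of_right_inverse
    (triQ_mul_powDiag_triQInv_powDiag hb2 hn (hcas hn)), ?_⟩
  -- `(c ± κ) / 2` are the roots of `x² - c x + 1`, the characteristic polynomial of `beta`
  set κ := Real.sqrt (c ^ 2 - 4)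
  have hκsq : κ ^ 2 = c ^ 2 - 4 := Real.sq_sqrt (by nlinarith)
  have hκ : 0 < κ := Real.sqrt_pos.mpr (by nlinarith)
  have hlim := tendsto_inv_mul_sum_beta_mul_div_casoratian (c := c) (d := d)
    (r := (c + κ) / 2) (s := (c - κ) / 2) (by ring) (by linear_combination (-1 / 4) * hκsq)
    (by nlinarith) (by linarith) (by nlinarith)
  rw [show (c + κ) / 2 - (c - κ) / 2 = κ by ring] at hlim
  refine hlim.congr' ?_
  filter_upwards [eventually_ge_atTop 2] with n hn
  rw [trace_inv_triQ hb2 hn (hcas hn)]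

/-- Corollary: for c > 2, d > 1 (λ ≠ 0), each Qₙ is invertible
and n⁻¹ tr(Qₙ⁻¹) → 1/κ₀ = 1/√(c² − 4) as n → ∞. -/
theorem trace_inv_limit (b c d : ℝ) (hb : b = 1 ∨ b = -1) (hc : 2 < c) (hd : 1 < d)
    (hlam : c - d ≠ 0) :
    (∀ n : ℕ, 2 ≤ n → IsUnit (triQ n b c d)) ∧
    Filter.Tendsto (fun n : ℕ => (1 / (n : ℝ)) * Matrix.trace (triQ n b c d)⁻¹)
      Filter.atTop (nhds (1 / Real.sqrt (c ^ 2 - 4))) :=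
  trace_inv_limit_general b c d hb hc hd
end

section
/- Fix b ∈ {1, −1} and real numbers c > 2 and d > 1 with λ = c − d ≠ 0, and for each n ≥ 2 let Q_n be the corresponding n×n tridiagonal matrix (which is invertible). Then (1/n²) · trace(Q_n^{-2}) converges to 0 as n → ∞. -/
open Finset

namespace Matrix.IsHermitian

variable {𝕜 n : Type*} [RCLike 𝕜] [Fintype n] [DecidableEq n]

lemma trace_cfc {A : Matrix n n 𝕜} (hA : A.IsHermitian) (f : ℝ → ℝ) :
    (cfc f A).trace = ∑ i, (f (hA.eigenvalues i) : 𝕜) := by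
  rw [hA.cfc_eq, IsHermitian.cfc, Unitary.conjStarAlgAut_apply, trace_mul_cycle,
    Unitary.coe_star_mul_self, one_mul, trace_diagonal]
  rfl

lemma inv_pow_eq_cfc {A : Matrix n n 𝕜} (hA : A.IsHermitian) (hA₀ : IsUnit A) (k : ℕ) :
    A⁻¹ ^ k = cfc (fun x : ℝ => x⁻¹ ^ k) A := by
  rw [cfc_pow (fun x : ℝ => x⁻¹) k A (finite_real_spectrum.continuousOn _),
    cfc_ringInverse_id A hA₀, nonsing_inv_eq_ringInverse]

lemma trace_inv_pow {A : Matrix n n 𝕜} (hA : A.IsHermitian) (hA₀ : IsUnit A) (k : ℕ) :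
    (A⁻¹ ^ k).trace = ∑ i, (hA.eigenvalues i : 𝕜)⁻¹ ^ k := by
  simp [hA.inv_pow_eq_cfc hA₀, hA.trace_cfc]

variable {A : Matrix n n ℝ} {δ : ℝ}

lemma le_eigenvalues_of_le_diag_sub_sum (hA : A.IsHermitian)
    (h : ∀ k, δ ≤ A k k - ∑ j ∈ univ.erase k, ‖A k j‖) (i : n) : δ ≤ hA.eigenvalues i := by
  have hμ : Module.End.HasEigenvalue A.toLin' (hA.eigenvalues i) := by
    rw [Module.End.hasEigenvalue_iff_mem_spectrum, spectrum_toLin']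
    exact hA.eigenvalues_mem_spectrum_real i
  obtain ⟨k, hk⟩ := eigenvalue_mem_ball hμ
  rw [Metric.mem_closedBall, Real.dist_eq, abs_sub_le_iff] at hk
  linarith [h k]

lemma isUnit_of_pos_le_eigenvalues (hA : A.IsHermitian) (hδ : 0 < δ)
    (h : ∀ i, δ ≤ hA.eigenvalues i) : IsUnit A :=
  (hA.posDef_iff_eigenvalues_pos.2 fun i => hδ.trans_le (h i)).isUnit

lemma trace_inv_sq_le (hA : A.IsHermitian) (hδ : 0 < δ) (h : ∀ i, δ ≤ hA.eigenvalues i) :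
    (A⁻¹ ^ 2).trace ≤ Fintype.card n / δ ^ 2 := by
  rw [hA.trace_inv_pow (hA.isUnit_of_pos_le_eigenvalues hδ h), div_eq_mul_inv, ← inv_pow,
    ← nsmul_eq_mul]
  refine sum_le_card_nsmul _ _ _ fun i _ => ?_
  have hi : 0 < hA.eigenvalues i := hδ.trans_le (h i)
  gcongr
  exact h i

lemma trace_inv_sq_nonneg (hA : A.IsHermitian) : 0 ≤ (A⁻¹ ^ 2).trace := by
  have := (posSemidef_conjTranspose_mul_self A⁻¹).trace_nonneg
  rwa [hA.inv.eq, ← sq] at this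

end Matrix.IsHermitian

lemma Fin.sum_ite_val_eq (n m : ℕ) :
    ∑ j : Fin n, (if (j : ℕ) = m then (1 : ℝ) else 0) = if m < n then 1 else 0 := by
  rw [Fin.sum_univ_eq_sum_range (fun j => if j = m then (1 : ℝ) else 0), sum_ite_eq']
  simp only [mem_range]

section triQ

variable (n : ℕ) (b c d : ℝ)

lemma triQ_isHermitian : (triQ n b c d).IsHermitian := by
  ext i j
  simp only [triQ, Matrix.conjTranspose_apply, Matrix.of_apply, star_trivial]
  by_cases h : j = i
  · subst h; rfl
  · rw [if_neg h, if_neg (Ne.symm h)]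
    exact if_congr or_comm rfl rfl

lemma sum_erase_norm_triQ_le (k : Fin n) :
    ∑ j ∈ univ.erase k, ‖triQ n b c d k j‖ ≤
      |b| * if (k : ℕ) = 0 ∨ (k : ℕ) = n - 1 then 1 else 2 := by
  set next : Fin n → ℝ := fun j => if (j : ℕ) = k + 1 then 1 else 0
  set prev : Fin n → ℝ := fun j => if (j : ℕ) + 1 = k then 1 else 0
  have hentry : ∀ j ∈ univ.erase k, ‖triQ n b c d k j‖ ≤ |b| * (next j + prev j) := by
    intro j hj
    simp only [triQ, Matrix.of_apply, if_neg (ne_of_mem_erase hj).symm, next, prev]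
    split_ifs <;> first | omega | simp
  have hnext : ∑ j, next j = if k + 1 < n then 1 else 0 := Fin.sum_ite_val_eq n _
  have hprev : ∑ j, prev j = if (k : ℕ) = 0 then 0 else 1 := by
    obtain ⟨k, hk⟩ := k
    cases k with
    | zero => simp [prev]
    | succ k => simpa [prev, if_pos (by omega : k < n)] using Fin.sum_ite_val_eq n k
  calc ∑ j ∈ univ.erase k, ‖triQ n b c d k j‖
      ≤ ∑ j, |b| * (next j + prev j) :=
        (sum_le_sum hentry).trans
          (sum_le_sum_of_subset_of_nonneg (subset_univ _) fun j _ _ => by positivity)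
    _ = |b| * ((if k + 1 < n then 1 else 0) + if (k : ℕ) = 0 then 0 else 1) := by
        rw [← mul_sum, sum_add_distrib, hnext, hprev]
    _ ≤ _ := by
        gcongr
        split_ifs <;> first | omega | norm_num

lemma min_le_triQ_diag_sub_sum (k : Fin n) :
    min (d - |b|) (c - 2 * |b|) ≤ triQ n b c d k k - ∑ j ∈ univ.erase k, ‖triQ n b c d k j‖ := by
  have hk := sum_erase_norm_triQ_le n b c d k
  have hdiag : triQ n b c d k k = if (k : ℕ) = 0 ∨ (k : ℕ) = n - 1 then d else c := by
    simp [triQ]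
  rw [hdiag]
  split_ifs at hk ⊢
  · linarith [min_le_left (d - |b|) (c - 2 * |b|)]
  · linarith [min_le_right (d - |b|) (c - 2 * |b|)]

lemma min_le_eigenvalues_triQ (i : Fin n) :
    min (d - |b|) (c - 2 * |b|) ≤ (triQ_isHermitian n b c d).eigenvalues i :=
  (triQ_isHermitian n b c d).le_eigenvalues_of_le_diag_sub_sum
    (min_le_triQ_diag_sub_sum n b c d) i

end triQ

theorem trace_inv_sq_limit_general (b c d : ℝ) (hb : b = 1 ∨ b = -1) (hc : 2 < c) (hd : 1 < d) :
    (∀ n : ℕ, 2 ≤ n → IsUnit (triQ n b c d)) ∧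
    Filter.Tendsto
      (fun n : ℕ => (1 / (n : ℝ) ^ 2) * Matrix.trace ((triQ n b c d)⁻¹ ^ 2))
      Filter.atTop (nhds 0) := by
  have hb₁ : |b| = 1 := by rcases hb with rfl | rfl <;> simp
  set δ := min (d - |b|) (c - 2 * |b|)
  have hδ : 0 < δ := lt_min (by linarith) (by linarith)
  have hH n := triQ_isHermitian n b c d
  have heig n := min_le_eigenvalues_triQ n b c d
  refine ⟨fun n _ => (hH n).isUnit_of_pos_le_eigenvalues hδ (heig n), ?_⟩
  refine squeeze_zero (fun n => by have := (hH n).trace_inv_sq_nonneg; positivity)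
    (fun n => ?_) (tendsto_const_div_atTop_nhds_zero_nat (δ ^ 2)⁻¹)
  calc 1 / (n : ℝ) ^ 2 * ((triQ n b c d)⁻¹ ^ 2).trace
      ≤ 1 / (n : ℝ) ^ 2 * (n / δ ^ 2) := by
        gcongr
        simpa using (hH n).trace_inv_sq_le hδ (heig n)
    _ = (δ ^ 2)⁻¹ / n := by
        rcases n.eq_zero_or_pos with rfl | hn
        · simp
        · field_simp

/-- Corollary: for c > 2, d > 1 (λ ≠ 0), each Qₙ is invertible
and n⁻² tr(Qₙ⁻²) → 0 as n → ∞. -/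
theorem trace_inv_sq_limit (b c d : ℝ) (hb : b = 1 ∨ b = -1) (hc : 2 < c) (hd : 1 < d)
    (hlam : c - d ≠ 0) :
    (∀ n : ℕ, 2 ≤ n → IsUnit (triQ n b c d)) ∧
    Filter.Tendsto
      (fun n : ℕ => (1 / (n : ℝ) ^ 2) * Matrix.trace ((triQ n b c d)⁻¹ ^ 2))
      Filter.atTop (nhds 0) :=
  trace_inv_sq_limit_general b c d hb hc hd
end

section
/- Let n ≥ 2, let φ be real with 0 < |φ| < 1 and γ > 0, and set b = φ/|φ|, c = (1+γ+φ²)/|φ|, d = (1+γ)/|φ|, λ = |φ|. Then d β_{n−1} − β_{n−2} ≠ 0, and for every i = 1, …, n, |v_i + v_{n−i+1}| < 2/(d − λ). -/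
/-!
With `λ = |φ|` one has `c = d + λ` and `λ d = 1 + γ > 1`. By induction, `0 < βᵢ < λ βᵢ₊₁`:
from `βᵢ < λ βᵢ₊₁` we get `βᵢ₊₂ = (d + λ) βᵢ₊₁ - βᵢ > d βᵢ₊₁ > βᵢ₊₁ / λ`. Hence `β` is increasing
(as `λ < 1`) and `D = d βₙ₋₁ - βₙ₋₂ > (d - λ) βₙ₋₁ > 0`. Since `|b| = 1`,
`|vᵢ + vₙ₋ᵢ₊₁| ≤ (βₙ₋ᵢ + βᵢ₋₁) / D ≤ 2 βₙ₋₁ / D < 2 / (d - λ)`.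
-/

theorem sub_pos_of_le_one_of_one_lt_mul {d lam : ℝ} (hlam0 : 0 < lam) (hlam1 : lam ≤ 1)
    (hd : 1 < lam * d) : 0 < d - lam := by
  nlinarith

namespace beta

variable {c d lam : ℝ}

theorem pos_and_lt_mul_succ (hlam : 0 < lam) (hd : 1 < lam * d) (hc : c = d + lam) (i : ℕ) :
    0 < beta c d i ∧ beta c d i < lam * beta c d (i + 1) := by
  subst hc
  induction i with
  | zero => exact ⟨one_pos, by simpa [beta] using hd⟩
  | succ i ih =>
    obtain ⟨hpos, hlt⟩ := ih
    have hpos' : 0 < beta (d + lam) d (i + 1) := by nlinarith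
    refine ⟨hpos', ?_⟩
    show beta _ d (i + 1) < lam * ((d + lam) * beta _ d (i + 1) - beta _ d i)
    nlinarith [mul_lt_mul_of_pos_left hlt hlam, mul_pos hlam hpos']

theorem pos (hlam : 0 < lam) (hd : 1 < lam * d) (hc : c = d + lam) (i : ℕ) :
    0 < beta c d i :=
  (pos_and_lt_mul_succ hlam hd hc i).1

theorem monotone (hlam0 : 0 < lam) (hlam1 : lam ≤ 1) (hd : 1 < lam * d) (hc : c = d + lam) :
    Monotone (beta c d) := by
  refine monotone_nat_of_le_succ fun i => ?_
  obtain ⟨-, hlt⟩ := pos_and_lt_mul_succ hlam0 hd hc i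
  nlinarith [pos hlam0 hd hc (i + 1)]

theorem sub_mul_lt_det (hlam : 0 < lam) (hd : 1 < lam * d) (hc : c = d + lam) (m : ℕ) :
    (d - lam) * beta c d (m + 1) < d * beta c d (m + 1) - beta c d m := by
  linarith [(pos_and_lt_mul_succ hlam hd hc m).2]

theorem det_pos (hlam0 : 0 < lam) (hlam1 : lam ≤ 1) (hd : 1 < lam * d) (hc : c = d + lam)
    (m : ℕ) : 0 < d * beta c d (m + 1) - beta c d m :=
  (mul_pos (sub_pos_of_le_one_of_one_lt_mul hlam0 hlam1 hd) (pos hlam0 hd hc (m + 1))).trans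
    (sub_mul_lt_det hlam0 hd hc m)

theorem abs_add_div_det_lt (hlam0 : 0 < lam) (hlam1 : lam ≤ 1) (hd : 1 < lam * d)
    (hc : c = d + lam) {m j k : ℕ} (hj : j ≤ m + 1) (hk : k ≤ m + 1) {s t : ℝ}
    (hs : |s| = 1) (ht : |t| = 1) :
    |s * beta c d j / (d * beta c d (m + 1) - beta c d m)
        + t * beta c d k / (d * beta c d (m + 1) - beta c d m)| < 2 / (d - lam) := by
  set D := d * beta c d (m + 1) - beta c d m
  have hdlam : 0 < d - lam := sub_pos_of_le_one_of_one_lt_mul hlam0 hlam1 hd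
  have hD : (d - lam) * beta c d (m + 1) < D := sub_mul_lt_det hlam0 hd hc m
  have hDpos : 0 < D := det_pos hlam0 hlam1 hd hc m
  have hsum : beta c d j + beta c d k ≤ 2 * beta c d (m + 1) := by
    have := monotone hlam0 hlam1 hd hc
    linarith [this hj, this hk]
  calc |s * beta c d j / D + t * beta c d k / D|
      ≤ |s * beta c d j / D| + |t * beta c d k / D| := abs_add_le _ _
    _ = (beta c d j + beta c d k) / D := by
      rw [abs_div, abs_div, abs_mul, abs_mul, hs, ht, abs_of_pos hDpos,
        abs_of_pos (pos hlam0 hd hc j), abs_of_pos (pos hlam0 hd hc k), one_mul, one_mul,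
        add_div]
    _ ≤ 2 * beta c d (m + 1) / D := by gcongr
    _ < 2 / (d - lam) := by
      rw [div_lt_div_iff₀ hDpos hdlam]
      nlinarith

end beta

/-- Lemma: in the AR(1)-plus-noise setting with 0 < |φ| < 1 and
γ > 0 (so b = φ/|φ|, c = (1+γ+φ²)/|φ|, d = (1+γ)/|φ|, λ = |φ|), one has
d β_{n−1} − β_{n−2} ≠ 0 and |vᵢ + v_{n−i+1}| < 2/(d − λ) for i = 1, …, n,
where vᵢ = b^{i−1} β_{n−i} / (d β_{n−1} − β_{n−2}). -/
theorem abs_v_add_v_lt (n : ℕ) (hn : 2 ≤ n) (φ γ : ℝ)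
    (hφ0 : 0 < |φ|) (hφ1 : |φ| < 1) (hγ : 0 < γ) :
    let b : ℝ := φ / |φ|
    let c : ℝ := (1 + γ + φ ^ 2) / |φ|
    let d : ℝ := (1 + γ) / |φ|
    let lam : ℝ := |φ|
    let D : ℝ := d * beta c d (n - 1) - beta c d (n - 2)
    D ≠ 0 ∧
    ∀ i : ℕ, 1 ≤ i → i ≤ n →
      |b ^ (i - 1) * beta c d (n - i) / D
          + b ^ (n - i + 1 - 1) * beta c d (n - (n - i + 1)) / D| < 2 / (d - lam) := by
  intro b c d lam D
  obtain ⟨m, rfl⟩ : ∃ m, n = m + 2 := ⟨n - 2, by omega⟩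
  have hc : c = d + lam := by
    simp only [c, d, lam]
    field_simp
    rw [sq_abs]
  have hd : 1 < lam * d := by
    simp only [lam, d]
    rw [mul_div_cancel₀ _ hφ0.ne']
    linarith
  have hb : |b| = 1 := by simp only [b, abs_div, abs_abs, div_self hφ0.ne']
  refine ⟨(beta.det_pos hφ0 hφ1.le hd hc m).ne', fun i hi1 hin => ?_⟩
  exact beta.abs_add_div_det_lt hφ0 hφ1.le hd hc (by omega) (by omega)
    (by rw [abs_pow, hb, one_pow]) (by rw [abs_pow, hb, one_pow])
end

section
/- Let n ≥ 2, let φ be real with 0 < φ < 1 and γ > 0, and set b = 1, c = (1+γ+φ²)/φ, d = (1+γ)/φ, λ = φ. Then the corresponding n×n tridiagonal matrix Q is invertible and the sum s_i of the i-th row of Q^{-1} satisfies 1/(d − φ) < s_i < 1/(c − 2) for every i = 1, …, n. -/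
/-!
The matrix `Q = triQ n 1 c d` is a Z-matrix (its off-diagonal entries are `≤ 0`) whose row sums
`ρᵢ` are `d - 1` at the two ends and `c - 2` inside, so `c - 2 ≤ ρᵢ < d - φ`, and `ρ₀ > c - 2`
because `φ < 1`. Z-matrices obey a minimum principle: at a minimum `v k` of `v`,
`(Q v) k ≤ v k * ρₖ`. With `s = Q⁻¹ 1`, applying it to `s - 1 / (d - φ)` gives the lower bound and
applying it to `1 / (c - 2) - s` gives `s ≤ 1 / (c - 2)`. The upper bound is strict because the
zero set of a nonnegative `v` with `Q v ≥ 0` is closed under the adjacency of the path graph, so it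
is empty unless `Q v = 0`.
-/

open Matrix

namespace Matrix

variable {ι : Type*} [Fintype ι] {A : Matrix ι ι ℝ}

theorem mulVec_one_apply (i : ι) : (A *ᵥ 1) i = ∑ j, A i j := by
  simp [mulVec, dotProduct]

section ZMatrix

variable (hA : ∀ i j, i ≠ j → A i j ≤ 0)
include hA

theorem mulVec_apply_le_mul_sum_of_isMin {v : ι → ℝ} {i : ι} (hmin : ∀ j, v i ≤ v j) :
    (A *ᵥ v) i ≤ v i * ∑ j, A i j := by
  have hterm : ∀ j, A i j * (v j - v i) ≤ 0 := fun j => by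
    rcases eq_or_ne i j with rfl | hij
    · simp
    · exact mul_nonpos_of_nonpos_of_nonneg (hA i j hij) (sub_nonneg.2 (hmin j))
  have : (A *ᵥ v) i - v i * ∑ j, A i j = ∑ j, A i j * (v j - v i) := by
    simp only [mulVec, dotProduct, Finset.mul_sum, mul_sub, Finset.sum_sub_distrib, mul_comm]
  linarith [Finset.sum_nonpos (s := Finset.univ) fun j _ => hterm j]

theorem pos_of_mulVec_pos (hrow : ∀ i, 0 ≤ ∑ j, A i j) {v : ι → ℝ}
    (hAv : ∀ i, 0 < (A *ᵥ v) i) (i : ι) : 0 < v i := by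
  have : Nonempty ι := ⟨i⟩
  obtain ⟨k, hk⟩ := Finite.exists_min v
  refine (hk i).trans_lt' ?_
  by_contra! hle
  nlinarith [mulVec_apply_le_mul_sum_of_isMin hA hk, hAv k, hrow k]

theorem nonneg_of_mulVec_nonneg (hrow : ∀ i, 0 < ∑ j, A i j) {v : ι → ℝ}
    (hAv : ∀ i, 0 ≤ (A *ᵥ v) i) (i : ι) : 0 ≤ v i := by
  have : Nonempty ι := ⟨i⟩
  obtain ⟨k, hk⟩ := Finite.exists_min v
  refine (hk i).trans' ?_
  by_contra! hlt
  nlinarith [mulVec_apply_le_mul_sum_of_isMin hA hk, hAv k, hrow k]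

theorem det_ne_zero_of_sum_pos [DecidableEq ι] (hrow : ∀ i, 0 < ∑ j, A i j) : A.det ≠ 0 := by
  intro hdet
  obtain ⟨v, hv0, hAv⟩ := exists_mulVec_eq_zero_iff.2 hdet
  refine hv0 (funext fun i => le_antisymm ?_ (nonneg_of_mulVec_nonneg hA hrow (by simp [hAv]) i))
  simpa using nonneg_of_mulVec_nonneg hA hrow (v := -v) (by simp [mulVec_neg, hAv]) i

theorem eq_zero_of_mulVec_nonneg_of_apply_neg {v : ι → ℝ} (hv : ∀ i, 0 ≤ v i) {i j : ι}
    (hvi : v i = 0) (hAv : 0 ≤ (A *ᵥ v) i) (hij : A i j < 0) : v j = 0 := by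
  have hterm : ∀ k ∈ Finset.univ, A i k * v k ≤ 0 := fun k _ => by
    rcases eq_or_ne i k with rfl | hik
    · simp [hvi]
    · exact mul_nonpos_of_nonpos_of_nonneg (hA i k hik) (hv k)
  have hsum : ∑ k, A i k * v k = 0 := le_antisymm (Finset.sum_nonpos hterm) hAv
  have := (Finset.sum_eq_zero_iff_of_nonpos hterm).1 hsum j (Finset.mem_univ j)
  exact (mul_eq_zero.1 this).resolve_left hij.ne

theorem pos_of_mulVec_nonneg_of_preconnected {G : SimpleGraph ι} (hG : G.Preconnected)
    (hadj : ∀ i j, G.Adj i j → A i j < 0) {v : ι → ℝ} (hv : ∀ i, 0 ≤ v i)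
    (hAv : ∀ i, 0 ≤ (A *ᵥ v) i) (hAv_ne : A *ᵥ v ≠ 0) (i : ι) : 0 < v i := by
  refine (hv i).lt_of_ne' fun hvi => hAv_ne ?_
  have hwalk : ∀ {j k} (p : G.Walk j k), v j = 0 → v k = 0 := by
    intro j k p
    induction p with
    | nil => exact id
    | cons h _ ih =>
      exact fun hj => ih (eq_zero_of_mulVec_nonneg_of_apply_neg hA hv hj (hAv _) (hadj _ _ h))
  have hzero : v = 0 := funext fun j => hwalk (hG i j).some hvi
  simp [hzero]

theorem one_div_lt_of_mulVec_eq_one (hrow : ∀ i, 0 ≤ ∑ j, A i j) {β : ℝ} (hβ : 0 < β)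
    (hrowβ : ∀ i, ∑ j, A i j < β) {s : ι → ℝ} (hs : A *ᵥ s = 1) (i : ι) : 1 / β < s i := by
  have := pos_of_mulVec_pos hA hrow (v := s - (1 / β) • 1) (fun k => by
    rw [mulVec_sub, mulVec_smul, hs]
    simp only [Pi.sub_apply, Pi.smul_apply, mulVec_one_apply, Pi.one_apply, smul_eq_mul]
    rw [sub_pos, div_mul_eq_mul_div, one_mul, div_lt_one hβ]
    exact hrowβ k) i
  simpa [sub_pos] using this

theorem lt_one_div_of_mulVec_eq_one {G : SimpleGraph ι} (hG : G.Preconnected)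
    (hadj : ∀ i j, G.Adj i j → A i j < 0) {α : ℝ} (hα : 0 < α)
    (hrowα : ∀ i, α ≤ ∑ j, A i j) {k : ι} (hk : α < ∑ j, A k j) {s : ι → ℝ} (hs : A *ᵥ s = 1)
    (i : ι) : s i < 1 / α := by
  have hAv : ∀ j, (A *ᵥ ((1 / α) • 1 - s)) j = (∑ l, A j l) / α - 1 := fun j => by
    rw [mulVec_sub, mulVec_smul, hs]
    simp only [Pi.sub_apply, Pi.smul_apply, mulVec_one_apply, Pi.one_apply, smul_eq_mul]
    ring
  have hAv_nonneg : ∀ j, 0 ≤ (A *ᵥ ((1 / α) • 1 - s)) j := fun j => by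
    rw [hAv, sub_nonneg, le_div_iff₀ hα, one_mul]
    exact hrowα j
  have hAv_ne : A *ᵥ ((1 / α) • 1 - s) ≠ 0 := fun h => by
    have := congrFun h k
    rw [hAv, Pi.zero_apply, sub_eq_zero, div_eq_one_iff_eq hα.ne'] at this
    exact hk.ne' this
  have := pos_of_mulVec_nonneg_of_preconnected hA hG hadj
    (nonneg_of_mulVec_nonneg hA (fun j => hα.trans_le (hrowα j)) hAv_nonneg) hAv_nonneg hAv_ne i
  simpa [sub_pos] using this

end ZMatrix

end Matrix

section TriQ

variable {n : ℕ} {b c d : ℝ}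

theorem triQ_apply_nonpos_of_ne (hb : 0 ≤ b) {i j : Fin n} (hij : i ≠ j) :
    triQ n b c d i j ≤ 0 := by
  simp only [triQ, of_apply, if_neg hij]
  split_ifs <;> linarith

theorem triQ_apply_of_adj {i j : Fin n} (h : (SimpleGraph.pathGraph n).Adj i j) :
    triQ n b c d i j = -b := by
  rw [SimpleGraph.pathGraph_adj] at h
  have hij : i ≠ j := fun hij => by subst hij; omega
  simp [triQ, hij, h]

theorem triQ_sum_apply (i : Fin n) :
    ∑ j, triQ n b c d i j = (if (i : ℕ) = 0 ∨ (i : ℕ) = n - 1 then d else c)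
      - (if 0 < (i : ℕ) then b else 0) - (if (i : ℕ) + 1 < n then b else 0) := by
  have hentry : ∀ j : Fin n, triQ n b c d i j =
      (if j = i then (if (i : ℕ) = 0 ∨ (i : ℕ) = n - 1 then d else c) else 0)
      - (if (j : ℕ) + 1 = i then b else 0) - (if (j : ℕ) = i + 1 then b else 0) := fun j => by
    simp only [triQ, of_apply, Fin.ext_iff]
    split_ifs <;> first | ring1 | (exfalso; omega)
  have hprev : ∑ j : Fin n, (if (j : ℕ) + 1 = i then b else 0) =
      if 0 < (i : ℕ) then b else 0 := by
    split_ifs with hi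
    · rw [Finset.sum_eq_single ⟨i - 1, by omega⟩
        (fun j _ hj => if_neg fun h => hj (Fin.ext (by dsimp only; omega))) (by simp),
        if_pos (by dsimp only; omega)]
    · exact Finset.sum_eq_zero fun j _ => if_neg (by omega)
  have hnext : ∑ j : Fin n, (if (j : ℕ) = i + 1 then b else 0) =
      if (i : ℕ) + 1 < n then b else 0 := by
    simpa using Fin.sum_univ_eq_sum_range (fun j => if j = (i : ℕ) + 1 then b else 0) n
  simp only [hentry, Finset.sum_sub_distrib, Finset.sum_ite_eq', Finset.mem_univ, if_true, hprev,
    hnext]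

end TriQ

/-- Theorem, bounds on row sums, 0 < φ < 1: with b = 1,
c = (1+γ+φ²)/φ, d = (1+γ)/φ, Q is invertible and every row sum sᵢ of Q⁻¹
satisfies 1/(d − φ) < sᵢ < 1/(c − 2). -/
theorem rowSum_bounds_pos_phi (n : ℕ) (hn : 2 ≤ n) (φ γ : ℝ)
    (hφ0 : 0 < φ) (hφ1 : φ < 1) (hγ : 0 < γ) :
    let c : ℝ := (1 + γ + φ ^ 2) / φ
    let d : ℝ := (1 + γ) / φ
    IsUnit (triQ n 1 c d) ∧
    ∀ i : Fin n,
      1 / (d - φ) < (∑ j, (triQ n 1 c d)⁻¹ i j) ∧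
      (∑ j, (triQ n 1 c d)⁻¹ i j) < 1 / (c - 2) := by
  intro c d
  have hc : c - 2 = ((1 - φ) ^ 2 + γ) / φ := by simp only [c]; field_simp; ring
  have hdc : d = c - φ := by simp only [c, d]; field_simp; ring
  have hc2 : 0 < c - 2 := by rw [hc]; positivity
  set Q := triQ n 1 c d
  have hZ : ∀ i j, i ≠ j → Q i j ≤ 0 := fun i j => triQ_apply_nonpos_of_ne zero_le_one
  have hrow : ∀ i, c - 2 ≤ ∑ j, Q i j ∧ ∑ j, Q i j < d - φ := fun i => by
    rw [triQ_sum_apply]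
    split_ifs <;> first | (exfalso; omega) | constructor <;> linarith
  have hrow0 : c - 2 < ∑ j, Q ⟨0, by omega⟩ j := by
    rw [triQ_sum_apply]
    split_ifs <;> first | (exfalso; omega) | linarith
  have hdet : Q.det ≠ 0 := det_ne_zero_of_sum_pos hZ fun i => hc2.trans_le (hrow i).1
  have hs : Q *ᵥ (Q⁻¹ *ᵥ 1) = 1 := by
    rw [mulVec_mulVec, mul_nonsing_inv _ hdet.isUnit, one_mulVec]
  refine ⟨(isUnit_iff_isUnit_det _).2 hdet.isUnit, fun i => ?_⟩
  simp only [← mulVec_one_apply]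
  exact ⟨one_div_lt_of_mulVec_eq_one hZ (fun j => hc2.le.trans (hrow j).1) (by linarith)
      (fun j => (hrow j).2) hs i,
    lt_one_div_of_mulVec_eq_one hZ (SimpleGraph.pathGraph_preconnected n)
      (fun j k h => (triQ_apply_of_adj h).trans_lt neg_one_lt_zero) hc2 (fun j => (hrow j).1)
      hrow0 hs i⟩
end

section
/- Let n ≥ 2, let φ be real with −1 < φ < 0 and γ > 0, and set b = −1, c = (1+γ+φ²)/(−φ), d = (1+γ)/(−φ), λ = −φ. Then the corresponding n×n tridiagonal matrix Q is invertible and the sum s_i of the i-th row of Q^{-1} satisfies 2/(c+2) − 1/(d+φ) < s_i < 1/(d+φ) for every i = 1, …, n. -/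
open Matrix Finset

theorem norm_le_of_sum_row_lt_diag {ι 𝕜 : Type*} [Fintype ι] [DecidableEq ι]
    [NormedDivisionRing 𝕜] {A : Matrix ι ι 𝕜} (x : ι → 𝕜) {M : ℝ}
    (hdom : ∀ k, ∑ j ∈ univ.erase k, ‖A k j‖ < ‖A k k‖)
    (hAx : ∀ k, ‖(A *ᵥ x) k‖ ≤ M * (‖A k k‖ - ∑ j ∈ univ.erase k, ‖A k j‖)) (i : ι) :
    ‖x i‖ ≤ M := by
  have : Nonempty ι := ⟨i⟩
  obtain ⟨m, hm⟩ := Finite.exists_max fun k => ‖x k‖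
  have hoff : ‖∑ j ∈ univ.erase m, A m j * x j‖ ≤ (∑ j ∈ univ.erase m, ‖A m j‖) * ‖x m‖ := by
    rw [sum_mul]
    refine (norm_sum_le _ _).trans (sum_le_sum fun j _ => ?_)
    rw [norm_mul]
    exact mul_le_mul_of_nonneg_left (hm j) (norm_nonneg _)
  have hdiag : ‖A m m‖ * ‖x m‖ ≤ ‖(A *ᵥ x) m‖ + (∑ j ∈ univ.erase m, ‖A m j‖) * ‖x m‖ := by
    rw [← norm_mul, mulVec, dotProduct, ← add_sum_erase _ _ (mem_univ m)]
    exact (norm_le_add_norm_add _ _).trans (add_le_add_right hoff _)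
  have hmargin : ‖x m‖ * (‖A m m‖ - ∑ j ∈ univ.erase m, ‖A m j‖)
      ≤ M * (‖A m m‖ - ∑ j ∈ univ.erase m, ‖A m j‖) := by
    linarith [hAx m]
  exact (hm i).trans (le_of_mul_le_mul_right hmargin (sub_pos.mpr (hdom m)))

namespace triQ

variable {n : ℕ} {b c d : ℝ}

theorem apply_self (k : Fin n) :
    triQ n b c d k k = if (k : ℕ) = 0 ∨ (k : ℕ) = n - 1 then d else c := by
  simp [triQ]

theorem apply_eq_ite (k j : Fin n) :
    triQ n b c d k j = (if k = j then (if (k : ℕ) = 0 ∨ (k : ℕ) = n - 1 then d else c) else 0)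
      + (if (j : ℕ) = k + 1 then -b else 0) + (if (k : ℕ) = j + 1 then -b else 0) := by
  simp only [triQ, of_apply, ← Fin.val_inj]
  split_ifs <;> first | (exfalso; omega) | ring

theorem sum_row (hn : 2 ≤ n) (k : Fin n) :
    ∑ j, triQ n b c d k j = if (k : ℕ) = 0 ∨ (k : ℕ) = n - 1 then d - b else c - 2 * b := by
  have hright : ∑ j : Fin n, (if (j : ℕ) = k + 1 then -b else 0)
      = if (k : ℕ) + 1 < n then -b else 0 := by
    rw [Fin.sum_univ_eq_sum_range (fun j => if j = (k : ℕ) + 1 then -b else 0)]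
    simp only [sum_ite_eq', mem_range]
  have hleft : ∑ j : Fin n, (if (k : ℕ) = j + 1 then -b else 0)
      = if 0 < (k : ℕ) then -b else 0 := by
    rw [Fin.sum_univ_eq_sum_range (fun j => if (k : ℕ) = j + 1 then -b else 0)]
    obtain ⟨k, hk⟩ := k
    cases k with
    | zero => simp
    | succ m =>
      simp only [Nat.add_right_cancel_iff, sum_ite_eq, mem_range]
      rw [if_pos (by omega), if_pos (Nat.succ_pos m)]
  simp only [apply_eq_ite, sum_add_distrib, sum_ite_eq, mem_univ, if_true, hright, hleft]
  have hk := k.isLt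
  split_ifs <;> first | (exfalso; omega) | ring

theorem abs_apply (k j : Fin n) : |triQ n b c d k j| = triQ n (-|b|) |c| |d| k j := by
  simp only [triQ, of_apply]
  split_ifs <;> simp

theorem sum_abs_offDiag (hn : 2 ≤ n) (k : Fin n) :
    ∑ j ∈ univ.erase k, |triQ n b c d k j|
      = if (k : ℕ) = 0 ∨ (k : ℕ) = n - 1 then |b| else 2 * |b| := by
  rw [sum_erase_eq_sub (mem_univ k)]
  simp_rw [abs_apply, sum_row hn, apply_self]
  split_ifs <;> ring

theorem sum_norm_offDiag_lt_norm_diag (hn : 2 ≤ n) (hc : 2 < c) (hd : 1 < d) (k : Fin n) :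
    ∑ j ∈ univ.erase k, ‖triQ n (-1) c d k j‖ < ‖triQ n (-1) c d k k‖ := by
  simp only [Real.norm_eq_abs, sum_abs_offDiag hn, apply_self, abs_neg, abs_one]
  split_ifs <;> rw [abs_of_pos (by linarith)] <;> linarith

theorem isUnit (hn : 2 ≤ n) (hc : 2 < c) (hd : 1 < d) : IsUnit (triQ n (-1) c d) :=
  (isUnit_iff_isUnit_det _).mpr
    (det_ne_zero_of_sum_row_lt_diag (sum_norm_offDiag_lt_norm_diag hn hc hd)).isUnit

end triQ

theorem abs_sum_inv_triQ_row_sub_le {n : ℕ} (hn : 2 ≤ n) {c d : ℝ} (hc : 2 < c) (hd : 1 < d)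
    (i : Fin n) :
    |∑ j, (triQ n (-1) c d)⁻¹ i j - 1 / (c + 2)| ≤ |c - d + 1| / ((c + 2) * (d - 1)) := by
  have hdet := (isUnit_iff_isUnit_det _).mp (triQ.isUnit hn hc hd)
  set x : Fin n → ℝ := (triQ n (-1) c d)⁻¹ *ᵥ 1 - (1 / (c + 2)) • 1
  have hQx : ∀ k, (triQ n (-1) c d *ᵥ x) k = 1 - (∑ j, triQ n (-1) c d k j) / (c + 2) := by
    intro k
    rw [mulVec_sub, mulVec_smul, mulVec_mulVec, mul_nonsing_inv _ hdet, one_mulVec]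
    simp [mulVec, dotProduct, div_eq_inv_mul]
  have hrow : ∀ k, ‖(triQ n (-1) c d *ᵥ x) k‖ ≤ |c - d + 1| / ((c + 2) * (d - 1)) *
      (‖triQ n (-1) c d k k‖ - ∑ j ∈ univ.erase k, ‖triQ n (-1) c d k j‖) := by
    intro k
    simp only [Real.norm_eq_abs, hQx, triQ.sum_row hn, triQ.sum_abs_offDiag hn,
      triQ.apply_self, abs_neg, abs_one]
    split_ifs
    · rw [abs_of_pos (by linarith : 0 < d),
        show 1 - (d - -1) / (c + 2) = (c - d + 1) / (c + 2) by field_simp; ring, abs_div,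
        abs_of_pos (by linarith : 0 < c + 2), div_mul_eq_div_div, div_mul_cancel₀ _ (by linarith)]
    · rw [abs_of_pos (by linarith : 0 < c), show c - 2 * -1 = c + 2 by ring,
        div_self (by linarith), sub_self, abs_zero]
      exact mul_nonneg (div_nonneg (abs_nonneg _) (by nlinarith)) (by linarith)
  have hx := norm_le_of_sum_row_lt_diag x (triQ.sum_norm_offDiag_lt_norm_diag hn hc hd) hrow i
  simpa [x, mulVec, dotProduct] using hx

/-- Theorem, bounds on row sums, −1 < φ < 0: with b = −1,
c = (1+γ+φ²)/(−φ), d = (1+γ)/(−φ), Q is invertible and every row sum sᵢ of Q⁻¹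
satisfies 2/(c+2) − 1/(d+φ) < sᵢ < 1/(d+φ). -/
theorem rowSum_bounds_neg_phi (n : ℕ) (hn : 2 ≤ n) (φ γ : ℝ)
    (hφ0 : -1 < φ) (hφ1 : φ < 0) (hγ : 0 < γ) :
    let c : ℝ := (1 + γ + φ ^ 2) / (-φ)
    let d : ℝ := (1 + γ) / (-φ)
    IsUnit (triQ n (-1) c d) ∧
    ∀ i : Fin n,
      2 / (c + 2) - 1 / (d + φ) < (∑ j, (triQ n (-1) c d)⁻¹ i j) ∧
      (∑ j, (triQ n (-1) c d)⁻¹ i j) < 1 / (d + φ) := by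
  intro c d
  have hφ : 0 < -φ := by linarith
  have hcd : c = d - φ := by simp only [c, d]; field_simp; ring
  -- `d (-φ) = 1 + γ > 1 ≥ 1 - (1 + φ)² = (2 + φ) (-φ)`
  have hd : 2 + φ < d := by
    simp only [d]; rw [lt_div_iff₀ hφ]; nlinarith [sq_nonneg (1 + φ)]
  have hd1 : 1 < d := by linarith
  have hc : 2 < c := by linarith
  have hM : |c - d + 1| / ((c + 2) * (d - 1)) < 1 / (d + φ) - 1 / (c + 2) := by
    rw [hcd, show d - φ - d + 1 = 1 - φ by ring, abs_of_pos (by linarith),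
      div_sub_div _ _ (by linarith) (by linarith), div_lt_div_iff₀ (by nlinarith) (by nlinarith)]
    nlinarith [mul_pos (mul_pos (by linarith : 0 < d - φ + 2) (by linarith : 0 < 1 - φ))
      (by linarith : 0 < d - 2 - φ)]
  refine ⟨triQ.isUnit hn hc hd1, fun i => ?_⟩
  obtain ⟨hlo, hhi⟩ := abs_le.mp (abs_sum_inv_triQ_row_sub_le hn hc hd1 i)
  constructor <;> linarith [show 2 / (c + 2) = 2 * (1 / (c + 2)) by ring]
end
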